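/- arXiv:2207.08116 — 5 statements merged into one kernel-verified Lean document; each statement's English description precedes it below -/
import Mathlib

section
/- Let n and k be positive integers and m = k·n + 1. A subset Ω of {1,…,n} × {1,…,m} is the support of some extremal n × m doubly stochastic array if and only if the following two conditions hold: (i) for each row index i with 1 ≤ i ≤ n, the set {j : (i,j) ∈ Ω} contains exactly k + 1 elements; and (ii) Ω does not contain any cycle. -/
/-- An `n × m` real matrix is a *doubly stochastic array* if its entries are
nonnegative, each column sums to `n` and each row sums to `m`. -/
def IsDSA (n m : ℕ) (A : Matrix (Fin n) (Fin m) ℝ) : Prop :=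
  (∀ i j, 0 ≤ A i j) ∧ (∀ j, ∑ i, A i j = (n : ℝ)) ∧ (∀ i, ∑ j, A i j = (m : ℝ))

/-- An array `A ∈ S(n,m)` is *extremal* if it cannot be written as a convex
combination of two doubly stochastic arrays both different from `A`. -/
def IsExtremal (n m : ℕ) (A : Matrix (Fin n) (Fin m) ℝ) : Prop :=
  IsDSA n m A ∧ ∀ (B C : Matrix (Fin n) (Fin m) ℝ) (t : ℝ),
    IsDSA n m B → IsDSA n m C → 0 < t → t < 1 →
    A = t • B + (1 - t) • C → B = A ∨ C = A

/-- The support of a matrix: the set of positions of its nonzero entries. -/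
def matSupp (n m : ℕ) (A : Matrix (Fin n) (Fin m) ℝ) : Set (Fin n × Fin m) :=
  {p | A p.1 p.2 ≠ 0}

/-- The size of the support of a matrix. -/
noncomputable def suppCard (n m : ℕ) (A : Matrix (Fin n) (Fin m) ℝ) : ℕ :=
  (matSupp n m A).ncard

/-- A subset `Ω` of positions contains a *cycle* if there are `s ≥ 2`, distinct row
indices `i₁,…,i_s` and distinct column indices `j₁,…,j_s` such that all the pairs
`(i₁,j₁), (i₂,j₁), (i₂,j₂), (i₃,j₂), …, (i_s,j_s), (i₁,j_s)` belong to `Ω`. -/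
def ContainsCycle (n m : ℕ) (Ω : Set (Fin n × Fin m)) : Prop :=
  ∃ s : ℕ, 2 ≤ s ∧ ∃ (i : ZMod s → Fin n) (j : ZMod s → Fin m),
    Function.Injective i ∧ Function.Injective j ∧
    ∀ t : ZMod s, (i t, j t) ∈ Ω ∧ (i (t + 1), j t) ∈ Ω

/-- Two matrices are *equivalent* if one is obtained from the other by a
permutation of rows and a permutation of columns. -/
def MatEquiv (n m : ℕ) (A B : Matrix (Fin n) (Fin m) ℝ) : Prop :=
  ∃ (σ : Equiv.Perm (Fin n)) (τ : Equiv.Perm (Fin m)), ∀ i j, B i j = A (σ i) (τ j)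


set_option linter.unusedSectionVars false
set_option linter.unusedVariables false
set_option maxHeartbeats 1000000

open Finset Module

section GenAux
variable {α β : Type*}
def GCycle (Ω : Set (α × β)) : Prop :=
  ∃ s : ℕ, 2 ≤ s ∧ ∃ (i : ZMod s → α) (j : ZMod s → β),
    Function.Injective i ∧ Function.Injective j ∧
    ∀ t : ZMod s, (i t, j t) ∈ Ω ∧ (i (t + 1), j t) ∈ Ω

lemma gcycle_mono {Ω Ω' : Set (α × β)} (h : Ω ⊆ Ω') (hc : GCycle Ω) : GCycle Ω' := by
  obtain ⟨s, hs, i, j, hi, hj, hmem⟩ := hc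
  exact ⟨s, hs, i, j, hi, hj, fun t => ⟨h (hmem t).1, h (hmem t).2⟩⟩

lemma gcycle_map {α' β' : Type*} {Ω : Set (α × β)} {Ω' : Set (α' × β')}
    (f : α → α') (g : β → β') (hf : Function.Injective f) (hg : Function.Injective g)
    (h : ∀ p ∈ Ω, (f p.1, g p.2) ∈ Ω') (hc : GCycle Ω) : GCycle Ω' := by
  obtain ⟨s, hs, i, j, hi, hj, hmem⟩ := hc
  exact ⟨s, hs, f ∘ i, g ∘ j, hf.comp hi, hg.comp hj,
    fun t => ⟨h _ (hmem t).1, h _ (hmem t).2⟩⟩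

lemma ncard_eq_sum_fibers [Fintype α] [Fintype β] (S : Set (α × β)) :
    S.ncard = ∑ x : α, ({y : β | (x, y) ∈ S}).ncard := by
  classical
  rw [Set.ncard_eq_toFinset_card' S]
  rw [Finset.card_eq_sum_card_fiberwise (f := Prod.fst) (t := Finset.univ)
    (fun x _ => Finset.mem_univ _)]
  refine Finset.sum_congr rfl fun x _ => ?_
  rw [Set.ncard_eq_toFinset_card' _]
  refine Finset.card_bij (fun p _ => p.2) ?_ ?_ ?_
  · intro p hp
    simp only [Finset.mem_filter, Set.mem_toFinset] at hp ⊢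
    simp only [Set.mem_setOf_eq]
    rcases hp with ⟨h1, h2⟩
    rwa [← h2]
  · intro p hp q hq hpq
    simp only [Finset.mem_filter, Set.mem_toFinset] at hp hq
    exact Prod.ext (hp.2.trans hq.2.symm) hpq
  · intro y hy
    simp only [Set.mem_toFinset, Set.mem_setOf_eq] at hy
    exact ⟨(x, y), by simp [hy], rfl⟩



/-- Extract a cycle from a closed non-repeating window of an alternating sequence. -/
lemma gcycle_of_seq {S : Set (α × β)} (f : ℕ → α) (g : ℕ → β)
    (h1 : ∀ t, (f t, g t) ∈ S) (h2 : ∀ t, (f (t + 1), g t) ∈ S)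
    (c s : ℕ) (hs : 2 ≤ s) (hf : f (c + s) = f c)
    (hwf : ∀ x y, c ≤ x → x < y → y < c + s → f x ≠ f y)
    (hwg : ∀ x y, c ≤ x → x < y → y < c + s → g x ≠ g y) : GCycle S := by
  haveI : NeZero s := ⟨by omega⟩
  haveI : Fact (1 < s) := ⟨by omega⟩
  refine ⟨s, hs, fun u => f (c + u.val), fun u => g (c + u.val), ?_, ?_, ?_⟩
  · intro u u' h
    by_contra hne
    have hval : u.val ≠ u'.val := fun hv => hne (ZMod.val_injective s hv)
    have h1 := ZMod.val_lt u
    have h2 := ZMod.val_lt u'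
    rcases Nat.lt_or_ge u.val u'.val with hlt | hge
    · exact hwf (c + u.val) (c + u'.val) (by omega) (by omega) (by omega) h
    · exact hwf (c + u'.val) (c + u.val) (by omega) (by omega) (by omega) h.symm
  · intro u u' h
    by_contra hne
    have hval : u.val ≠ u'.val := fun hv => hne (ZMod.val_injective s hv)
    have h1 := ZMod.val_lt u
    have h2 := ZMod.val_lt u'
    rcases Nat.lt_or_ge u.val u'.val with hlt | hge
    · exact hwg (c + u.val) (c + u'.val) (by omega) (by omega) (by omega) h
    · exact hwg (c + u'.val) (c + u.val) (by omega) (by omega) (by omega) h.symm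
  · intro t
    refine ⟨h1 (c + t.val), ?_⟩
    show (f (c + (t + 1).val), g (c + t.val)) ∈ S
    have hval : (t + 1).val = (t.val + 1) % s := by
      rw [ZMod.val_add, ZMod.val_one]
    have htlt := ZMod.val_lt t
    rcases Nat.lt_or_ge (t.val + 1) s with hlt | hge
    · rw [hval, Nat.mod_eq_of_lt hlt]
      have : c + (t.val + 1) = (c + t.val) + 1 := by omega
      rw [this]
      exact h2 (c + t.val)
    · have hts : t.val = s - 1 := by omega
      have h0 : (t.val + 1) % s = 0 := by
        have : t.val + 1 = s := by omega
        simp [this]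
      rw [hval, h0]
      have he := h2 (c + t.val)
      have : c + t.val + 1 = c + s := by omega
      rw [this, hf] at he
      simpa using he


lemma gcycle_flip {S : Set (α × β)} (h : GCycle {q : β × α | (q.2, q.1) ∈ S}) :
    GCycle S := by
  obtain ⟨s, hs, I, J, hI, hJ, hm⟩ := h
  haveI : NeZero s := ⟨by omega⟩
  refine ⟨s, hs, fun t => J (-t), fun t => I (-t), ?_, ?_, ?_⟩
  · exact hJ.comp (fun a b hab => neg_injective hab)
  · exact hI.comp (fun a b hab => neg_injective hab)
  · intro t
    constructor
    · exact (hm (-t)).1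
    · have h2 := (hm (-t - 1)).2
      have e1 : -t - 1 + 1 = -t := by ring
      have e2 : -(t + 1) = -t - 1 := by ring
      rw [e1] at h2
      show (J (-(t+1)), I (-t)) ∈ S
      rw [e2]
      exact h2


lemma gcycle_of_moves [Finite α] [Finite β] {S : Set (α × β)} (hne : S.Nonempty)
    (hrow : ∀ p ∈ S, ∃ b', b' ≠ p.2 ∧ (p.1, b') ∈ S)
    (hcol : ∀ p ∈ S, ∃ a', a' ≠ p.1 ∧ (a', p.2) ∈ S) : GCycle S := by
  classical
  -- total choice functions
  have hcolT : ∀ p : α × β, ∃ a', p ∈ S → a' ≠ p.1 ∧ (a', p.2) ∈ S := by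
    intro p
    by_cases hp : p ∈ S
    · obtain ⟨a', h⟩ := hcol p hp; exact ⟨a', fun _ => h⟩
    · exact ⟨p.1, fun h => absurd h hp⟩
  have hrowT : ∀ p : α × β, ∃ b', p ∈ S → b' ≠ p.2 ∧ (p.1, b') ∈ S := by
    intro p
    by_cases hp : p ∈ S
    · obtain ⟨b', h⟩ := hrow p hp; exact ⟨b', fun _ => h⟩
    · exact ⟨p.2, fun h => absurd h hp⟩
  choose fA hfA using hcolT
  choose fB hfB using hrowT
  obtain ⟨p₀, hp₀⟩ := hne
  set step : α × β → α × β := fun p => (fA p, fB (fA p, p.2)) with hstep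
  set h : ℕ → α × β := fun t => step^[t] p₀ with hh
  have hsucc : ∀ t, h (t + 1) = step (h t) := by
    intro t; simp [hh, Function.iterate_succ_apply']
  -- invariant
  have hinv : ∀ t, h t ∈ S := by
    intro t
    induction t with
    | zero => simpa [hh] using hp₀
    | succ t ih =>
      rw [hsucc]
      have h1 := hfA (h t) ih
      have h2 := hfB (fA (h t), (h t).2) h1.2
      exact h2.2
  set f : ℕ → α := fun t => (h t).1 with hf
  set g : ℕ → β := fun t => (h t).2 with hg
  have key1 : ∀ t, (f t, g t) ∈ S := fun t => hinv t
  have key2 : ∀ t, (f (t + 1), g t) ∈ S := by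
    intro t
    have h1 := hfA (h t) (hinv t)
    have heq : f (t + 1) = fA (h t) := by show (h (t+1)).1 = _; rw [hsucc]
    rw [heq]
    exact h1.2
  have keyf : ∀ t, f (t + 1) ≠ f t := by
    intro t
    have h1 := hfA (h t) (hinv t)
    have heq : f (t + 1) = fA (h t) := by show (h (t+1)).1 = _; rw [hsucc]
    rw [heq]
    exact h1.1
  have keyg : ∀ t, g (t + 1) ≠ g t := by
    intro t
    have h1 := hfA (h t) (hinv t)
    have h2 := hfB (fA (h t), (h t).2) h1.2
    have heq : g (t + 1) = fB (fA (h t), (h t).2) := by show (h (t+1)).2 = _; rw [hsucc]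
    rw [heq]
    exact h2.1
  -- the walk
  set v : ℕ → α ⊕ β := fun t => if t % 2 = 0 then Sum.inl (f (t / 2)) else Sum.inr (g (t / 2))
    with hv
  have veven : ∀ c, v (2 * c) = Sum.inl (f c) := by
    intro c; simp [hv, Nat.mul_mod_right, Nat.mul_div_cancel_left c (by norm_num : 0 < 2)]
  have vodd : ∀ c, v (2 * c + 1) = Sum.inr (g c) := by
    intro c
    have h1 : (2 * c + 1) % 2 = 1 := by omega
    have h2 : (2 * c + 1) / 2 = c := by omega
    simp [hv, h1, h2]
  -- pigeonhole
  have hcoll : ∃ b, ∃ a, a < b ∧ v a = v b := by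
    obtain ⟨x, y, hxy, hvv⟩ := Finite.exists_ne_map_eq_of_infinite v
    rcases Nat.lt_or_ge x y with hlt | hge
    · exact ⟨y, x, hlt, hvv⟩
    · exact ⟨x, y, by omega, hvv.symm⟩
  set b := Nat.find hcoll with hbdef
  obtain ⟨a, hab, hvab⟩ : ∃ a < b, v a = v b := Nat.find_spec hcoll
  have hmin : ∀ b' < b, ¬∃ a' < b', v a' = v b' := fun b' hb' => Nat.find_min hcoll hb'
  have hW : ∀ x y, x < y → y < b → v x ≠ v y := by
    intro x y hxy hyb heq
    exact hmin y hyb ⟨x, hxy, heq⟩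
  -- parity analysis
  rcases Nat.even_or_odd a with ⟨c, hc⟩ | ⟨c, hc⟩
  · -- a = 2c even
    have ha2 : a = 2 * c := by omega
    rcases Nat.even_or_odd b with ⟨d, hd⟩ | ⟨d, hd⟩
    · have hb2 : b = 2 * d := by omega
      have hcd : c < d := by omega
      set s := d - c with hs
      have hds : d = c + s := by omega
      have hfcs : f (c + s) = f c := by
        rw [ha2, hb2, veven, veven] at hvab
        rw [← hds]
        exact (Sum.inl_injective hvab).symm
      have hs2 : 2 ≤ s := by
        rcases Nat.lt_or_ge s 2 with hlt | hge
        · interval_cases s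
          · omega
          · exact absurd hfcs (by simpa using keyf c)
        · exact hge
      refine gcycle_of_seq f g key1 key2 c s hs2 hfcs ?_ ?_
      · intro x y hcx hxy hyb heq
        exact hW (2 * x) (2 * y) (by omega) (by omega) (by rw [veven, veven, heq])
      · intro x y hcx hxy hyb heq
        exact hW (2 * x + 1) (2 * y + 1) (by omega) (by omega) (by rw [vodd, vodd, heq])
    · -- b odd: impossible since v a = inl, v b = inr
      have hb2 : b = 2 * d + 1 := by omega
      rw [ha2, hb2, veven, vodd] at hvab
      exact absurd hvab (by simp)
  · -- a = 2c+1 odd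
    have ha2 : a = 2 * c + 1 := by omega
    rcases Nat.even_or_odd b with ⟨d, hd⟩ | ⟨d, hd⟩
    · have hb2 : b = 2 * d := by omega
      rw [ha2, hb2, veven, vodd] at hvab
      exact absurd hvab (by simp)
    · have hb2 : b = 2 * d + 1 := by omega
      have hcd : c < d := by omega
      set s := d - c with hs
      have hds : d = c + s := by omega
      have hgcs : g (c + s) = g c := by
        rw [ha2, hb2, vodd, vodd] at hvab
        rw [← hds]
        exact (Sum.inr_injective hvab).symm
      have hs2 : 2 ≤ s := by
        rcases Nat.lt_or_ge s 2 with hlt | hge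
        · interval_cases s
          · omega
          · exact absurd hgcs (by simpa using keyg c)
        · exact hge
      refine gcycle_flip (gcycle_of_seq (S := {q : β × α | (q.2, q.1) ∈ S})
        g (fun t => f (t + 1)) (fun t => key2 t) (fun t => key1 (t + 1))
        c s hs2 hgcs ?_ ?_)
      · intro x y hcx hxy hyb heq
        exact hW (2 * x + 1) (2 * y + 1) (by omega) (by omega) (by rw [vodd, vodd, heq])
      · intro x y hcx hxy hyb heq
        have heq' : f (x + 1) = f (y + 1) := heq
        exact hW (2 * (x + 1)) (2 * (y + 1)) (by omega) (by omega)
          (by rw [veven, veven, heq'])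



variable [Fintype α] [Fintype β]

/-- kernel triviality from acyclicity -/
lemma zero_of_no_gcycle [Fintype α] [Fintype β] {Ω : Set (α × β)} (hnc : ¬ GCycle Ω)
    (D : α → β → ℝ) (hsupp : ∀ a b, D a b ≠ 0 → (a, b) ∈ Ω)
    (hr : ∀ a, ∑ b, D a b = 0) (hc : ∀ b, ∑ a, D a b = 0) : ∀ a b, D a b = 0 := by
  by_contra hD
  push_neg at hD
  obtain ⟨a0, b0, hab0⟩ := hD
  set S : Set (α × β) := {p | D p.1 p.2 ≠ 0} with hS
  have hSsub : S ⊆ Ω := fun p hp => hsupp p.1 p.2 hp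
  have hrowS : ∀ p ∈ S, ∃ b', b' ≠ p.2 ∧ (p.1, b') ∈ S := by
    intro p hp
    by_contra hcontra
    push_neg at hcontra
    have : ∑ b, D p.1 b = D p.1 p.2 := by
      refine Finset.sum_eq_single p.2 (fun b _ hb => ?_) (fun h => absurd (mem_univ _) h)
      have h2 := hcontra b hb
      simp only [hS, Set.mem_setOf_eq, not_not] at h2
      exact h2
    rw [hr p.1] at this
    exact hp this.symm
  have hcolS : ∀ p ∈ S, ∃ a', a' ≠ p.1 ∧ (a', p.2) ∈ S := by
    intro p hp
    by_contra hcontra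
    push_neg at hcontra
    have : ∑ a, D a p.2 = D p.1 p.2 := by
      refine Finset.sum_eq_single p.1 (fun a _ ha => ?_) (fun h => absurd (mem_univ _) h)
      have h2 := hcontra a ha
      simp only [hS, Set.mem_setOf_eq, not_not] at h2
      exact h2
    rw [hc p.2] at this
    exact hp this.symm
  exact hnc (gcycle_mono hSsub (gcycle_of_moves ⟨(a0, b0), hab0⟩ hrowS hcolS))

variable [Fintype α] [Fintype β]

open Classical in
/-- matrix from coordinates on `Ω` -/
noncomputable def matOf (Ω : Set (α × β)) (x : ↥Ω → ℝ) : α → β → ℝ :=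
  fun a b => if h : (a, b) ∈ Ω then x ⟨(a, b), h⟩ else 0

open Classical in
/-- the row-sum/column-sum linear map -/
noncomputable def phiMap (Ω : Set (α × β)) : (↥Ω → ℝ) →ₗ[ℝ] ((α → ℝ) × (β → ℝ)) where
  toFun x := (fun a => ∑ e : ↥Ω, if (e : α × β).1 = a then x e else 0,
              fun b => ∑ e : ↥Ω, if (e : α × β).2 = b then x e else 0)
  map_add' x y := by
    refine Prod.ext ?_ ?_ <;> funext t <;>
      simp only [Pi.add_apply, Prod.fst_add, Prod.snd_add] <;>
      rw [← Finset.sum_add_distrib] <;>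
      exact Finset.sum_congr rfl fun e _ => by split <;> simp
  map_smul' r x := by
    refine Prod.ext ?_ ?_ <;> funext t <;>
      simp only [RingHom.id_apply, Prod.smul_fst, Prod.smul_snd, Pi.smul_apply,
        smul_eq_mul] <;>
      rw [Finset.mul_sum] <;>
      exact Finset.sum_congr rfl fun e _ => by split <;> simp

open Classical in
lemma matOf_eq_sum (Ω : Set (α × β)) (x : ↥Ω → ℝ) (a : α) (b : β) :
    matOf Ω x a b = ∑ e : ↥Ω, if (e : α × β) = (a, b) then x e else 0 := by
  rw [matOf]
  split
  · rename_i h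
    rw [Finset.sum_eq_single (⟨(a, b), h⟩ : ↥Ω)]
    · simp
    · intro e _ hne
      have : (e : α × β) ≠ (a, b) := fun hh => hne (Subtype.ext hh)
      simp [this]
    · intro h; exact absurd (mem_univ _) h
  · rename_i h
    refine (Finset.sum_eq_zero fun e _ => ?_).symm
    have : (e : α × β) ≠ (a, b) := fun hh => h (hh ▸ e.2)
    simp [this]

open Classical in
lemma matOf_row (Ω : Set (α × β)) (x : ↥Ω → ℝ) (a : α) :
    ∑ b, matOf Ω x a b = (phiMap Ω x).1 a := by
  simp only [matOf_eq_sum]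
  rw [Finset.sum_comm]
  show _ = ∑ e : ↥Ω, if (e : α × β).1 = a then x e else 0
  refine Finset.sum_congr rfl fun e _ => ?_
  have : ∀ b : β, ((e : α × β) = (a, b)) = ((e : α × β).1 = a ∧ (e : α × β).2 = b) := by
    intro b; rw [Prod.ext_iff]
  simp only [this, ite_and]
  by_cases h : (e : α × β).1 = a
  · simp [h, Finset.sum_ite_eq]
  · simp [h]

open Classical in
lemma matOf_col (Ω : Set (α × β)) (x : ↥Ω → ℝ) (b : β) :
    ∑ a, matOf Ω x a b = (phiMap Ω x).2 b := by
  simp only [matOf_eq_sum]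
  rw [Finset.sum_comm]
  show _ = ∑ e : ↥Ω, if (e : α × β).2 = b then x e else 0
  refine Finset.sum_congr rfl fun e _ => ?_
  have : ∀ a : α, ((e : α × β) = (a, b)) = ((e : α × β).2 = b ∧ (e : α × β).1 = a) := by
    intro a; rw [Prod.ext_iff]; exact propext (and_comm)
  simp only [this, ite_and]
  by_cases h : (e : α × β).2 = b
  · simp [h, Finset.sum_ite_eq]
  · simp [h]

lemma matOf_supp (Ω : Set (α × β)) (x : ↥Ω → ℝ) (a : α) (b : β) (h : matOf Ω x a b ≠ 0) :
    (a, b) ∈ Ω := by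
  by_contra hn
  rw [matOf] at h
  simp [hn] at h

lemma matOf_apply_mem (Ω : Set (α × β)) (x : ↥Ω → ℝ) (e : ↥Ω) :
    matOf Ω x (e : α × β).1 (e : α × β).2 = x e := by
  rw [matOf]
  split
  · exact congrArg x (Subtype.ext Prod.mk.eta)
  · rename_i h
    exact absurd (by simpa using e.2) h

open Classical in
/-- the balance functional -/
noncomputable def balL (α β : Type*) [Fintype α] [Fintype β] :
    ((α → ℝ) × (β → ℝ)) →ₗ[ℝ] ℝ where
  toFun p := (∑ a, p.1 a) - (∑ b, p.2 b)
  map_add' p q := by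
    simp only [Prod.fst_add, Prod.snd_add, Pi.add_apply, Finset.sum_add_distrib]
    ring
  map_smul' r p := by
    simp only [Prod.smul_fst, Prod.smul_snd, Pi.smul_apply, smul_eq_mul, RingHom.id_apply,
      ← Finset.mul_sum]
    ring

lemma phi_mem_ker_balL (Ω : Set (α × β)) (x : ↥Ω → ℝ) :
    phiMap Ω x ∈ LinearMap.ker (balL α β) := by
  classical
  simp only [LinearMap.mem_ker, balL, LinearMap.coe_mk, AddHom.coe_mk, phiMap]
  rw [Finset.sum_comm, Finset.sum_comm (γ := β), sub_eq_zero]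
  refine Finset.sum_congr rfl fun e _ => ?_
  rw [Finset.sum_ite_eq univ (e : α × β).1 (fun _ => x e),
    Finset.sum_ite_eq univ (e : α × β).2 (fun _ => x e)]
  simp

lemma balL_surjective [Nonempty β] : Function.Surjective (balL α β) := by
  intro r
  have hcb : (0 : ℝ) < (Fintype.card β : ℝ) := by
    exact_mod_cast Fintype.card_pos
  refine ⟨(0, fun _ => -r / (Fintype.card β : ℝ)), ?_⟩
  simp only [balL, LinearMap.coe_mk, AddHom.coe_mk, Pi.zero_apply, Finset.sum_const,
    Finset.card_univ, nsmul_eq_mul, Finset.sum_const_zero]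
  field_simp
  ring

lemma finrank_ker_balL [Nonempty β] :
    finrank ℝ (LinearMap.ker (balL α β)) + 1 = Fintype.card α + Fintype.card β := by
  have h1 := LinearMap.finrank_range_add_finrank_ker (balL α β)
  rw [LinearMap.range_eq_top.2 balL_surjective, finrank_top] at h1
  have h2 : finrank ℝ ((α → ℝ) × (β → ℝ)) = Fintype.card α + Fintype.card β := by
    rw [Module.finrank_prod, Module.finrank_fintype_fun_eq_card,
      Module.finrank_fintype_fun_eq_card]
  rw [h2] at h1
  have h3 : finrank ℝ ℝ = 1 := Module.finrank_self ℝ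
  omega

lemma phi_injective {Ω : Set (α × β)} (hnc : ¬ GCycle Ω) :
    Function.Injective (phiMap Ω) := by
  rw [← LinearMap.ker_eq_bot]
  rw [LinearMap.ker_eq_bot']
  intro x hx
  have hrow : ∀ a, ∑ b, matOf Ω x a b = 0 := by
    intro a; rw [matOf_row, hx]; rfl
  have hcol : ∀ b, ∑ a, matOf Ω x a b = 0 := by
    intro b; rw [matOf_col, hx]; rfl
  have hzero := zero_of_no_gcycle hnc (matOf Ω x) (matOf_supp Ω x) hrow hcol
  funext e
  rw [← matOf_apply_mem Ω x e, hzero]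
  rfl

lemma finrank_domain (Ω : Set (α × β)) : finrank ℝ (↥Ω → ℝ) = Ω.ncard := by
  classical
  rw [Module.finrank_fintype_fun_eq_card, ← Nat.card_eq_fintype_card, Nat.card_coe_set_eq]

/-- dimension bound: acyclic supports are small -/
lemma ncard_le_of_no_gcycle [Nonempty β] {Ω : Set (α × β)} (hnc : ¬ GCycle Ω) :
    Ω.ncard + 1 ≤ Fintype.card α + Fintype.card β := by
  classical
  set Φ' : (↥Ω → ℝ) →ₗ[ℝ] LinearMap.ker (balL α β) :=
    (phiMap Ω).codRestrict (LinearMap.ker (balL α β)) (fun x => phi_mem_ker_balL Ω x) with hΦ'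
  have hinj : Function.Injective Φ' := by
    intro x y hxy
    exact phi_injective hnc (congrArg Subtype.val hxy)
  have hle := LinearMap.finrank_le_finrank_of_injective hinj
  rw [finrank_domain] at hle
  have := finrank_ker_balL (α := α) (β := β)
  omega

/-- existence of a matrix with prescribed margins on a tight acyclic support -/
lemma exists_matrix [Nonempty β] {Ω : Set (α × β)} (hnc : ¬ GCycle Ω)
    (hcard : Ω.ncard + 1 = Fintype.card α + Fintype.card β)
    (rw : α → ℝ) (cl : β → ℝ) (hbal : ∑ a, rw a = ∑ b, cl b) :
    ∃ A : α → β → ℝ, (∀ a b, A a b ≠ 0 → (a, b) ∈ Ω) ∧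
      (∀ a, ∑ b, A a b = rw a) ∧ (∀ b, ∑ a, A a b = cl b) := by
  classical
  set Φ' : (↥Ω → ℝ) →ₗ[ℝ] LinearMap.ker (balL α β) :=
    (phiMap Ω).codRestrict (LinearMap.ker (balL α β)) (fun x => phi_mem_ker_balL Ω x) with hΦ'
  have hinj : Function.Injective Φ' := by
    intro x y hxy
    exact phi_injective hnc (congrArg Subtype.val hxy)
  have hfr : finrank ℝ (↥Ω → ℝ) = finrank ℝ (LinearMap.ker (balL α β)) := by
    rw [finrank_domain]
    have := finrank_ker_balL (α := α) (β := β)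
    omega
  have hsurj : Function.Surjective Φ' :=
    (LinearMap.injective_iff_surjective_of_finrank_eq_finrank hfr).1 hinj
  have hmem : (rw, cl) ∈ LinearMap.ker (balL α β) := by
    simp only [LinearMap.mem_ker, balL, LinearMap.coe_mk, AddHom.coe_mk]
    rw [hbal]; ring
  obtain ⟨x, hx⟩ := hsurj ⟨(rw, cl), hmem⟩
  have hx' : phiMap Ω x = (rw, cl) := congrArg Subtype.val hx
  refine ⟨matOf Ω x, matOf_supp Ω x, fun a => ?_, fun b => ?_⟩
  · rw [matOf_row, hx']
  · rw [matOf_col, hx']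

/-- the step relation of the bipartite graph of a support -/
def Estep (Ω : Set (α × β)) : (α ⊕ β) → (α ⊕ β) → Prop := fun x y =>
  (∃ p ∈ Ω, x = Sum.inl p.1 ∧ y = Sum.inr p.2) ∨
  (∃ p ∈ Ω, x = Sum.inr p.2 ∧ y = Sum.inl p.1)

/-- lower bound on edges of a connected graph -/
lemma card_ge_of_connected (Ω : Set (α × β)) (v0 : α ⊕ β)
    (hconn : ∀ v, Relation.ReflTransGen (Estep Ω) v0 v) :
    Fintype.card α + Fintype.card β ≤ Ω.ncard + 1 := by
  classical
  set Ψ : ((α ⊕ β) → ℝ) →ₗ[ℝ] (↥Ω → ℝ) :=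
    { toFun := fun f => fun e => f (Sum.inl (e : α × β).1) - f (Sum.inr (e : α × β).2)
      map_add' := fun f g => by funext e; simp only [Pi.add_apply]; ring
      map_smul' := fun r f => by
        funext e
        simp only [Pi.smul_apply, smul_eq_mul, RingHom.id_apply]
        ring } with hΨ
  have hker : ∀ f ∈ LinearMap.ker Ψ, ∀ v, f v = f v0 := by
    intro f hf v
    have hstep : ∀ x y, Estep Ω x y → f x = f y := by
      intro x y hxy
      have hf' : ∀ e : ↥Ω, f (Sum.inl (e : α × β).1) = f (Sum.inr (e : α × β).2) := by
        intro e
        have := congrFun (LinearMap.mem_ker.1 hf) e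
        simp only [hΨ, LinearMap.coe_mk, AddHom.coe_mk, Pi.zero_apply] at this
        linarith
      rcases hxy with ⟨p, hp, hx, hy⟩ | ⟨p, hp, hx, hy⟩
      · rw [hx, hy]; exact hf' ⟨p, hp⟩
      · rw [hx, hy]; exact (hf' ⟨p, hp⟩).symm
    have h := hconn v
    induction h with
    | refl => rfl
    | tail _ hstep' ih => rw [← hstep _ _ hstep', ih]
  have hkerle : LinearMap.ker Ψ ≤ Submodule.span ℝ {(fun _ => (1 : ℝ) : (α ⊕ β) → ℝ)} := by
    intro f hf
    have : f = f v0 • (fun _ => (1 : ℝ)) := by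
      funext v
      simp [hker f hf v]
    rw [this]
    exact Submodule.smul_mem _ _ (Submodule.mem_span_singleton_self _)
  have hkerfr : finrank ℝ (LinearMap.ker Ψ) ≤ 1 := by
    have h1 : finrank ℝ (Submodule.span ℝ ({(fun _ => (1 : ℝ))} : Set ((α ⊕ β) → ℝ))) ≤ 1 := by
      have := finrank_span_le_card (R := ℝ) ({(fun _ => (1 : ℝ))} : Set ((α ⊕ β) → ℝ))
      simpa using this
    exact le_trans (Submodule.finrank_mono hkerle) h1
  have h1 := LinearMap.finrank_range_add_finrank_ker Ψ
  have h2 : finrank ℝ ((α ⊕ β) → ℝ) = Fintype.card α + Fintype.card β := by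
    rw [Module.finrank_fintype_fun_eq_card, Fintype.card_sum]
  have h3 : finrank ℝ (LinearMap.range Ψ) ≤ Ω.ncard := by
    have h4 := Submodule.finrank_le (LinearMap.range Ψ)
    rw [finrank_domain] at h4
    exact h4
  omega



end GenAux

lemma no_cycle_of_extremal {n m : ℕ} {A : Matrix (Fin n) (Fin m) ℝ}
    (hA : IsExtremal n m A) : ¬ ContainsCycle n m (matSupp n m A) := by
  classical
  rintro ⟨s, hs, I, J, hI, hJ, hmem⟩
  haveI : NeZero s := ⟨by omega⟩
  haveI : Fact (1 < s) := ⟨by omega⟩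
  obtain ⟨⟨hpos, hcols, hrows⟩, hext⟩ := hA
  -- all entries along the cycle are positive
  have hApos : ∀ t : ZMod s, 0 < A (I t) (J t) :=
    fun t => lt_of_le_of_ne (hpos _ _) (Ne.symm (hmem t).1)
  have hApos' : ∀ t : ZMod s, 0 < A (I (t + 1)) (J t) :=
    fun t => lt_of_le_of_ne (hpos _ _) (Ne.symm (hmem t).2)
  set ε : ℝ := univ.inf' univ_nonempty
    (fun t : ZMod s => min (A (I t) (J t)) (A (I (t + 1)) (J t))) with hε
  have hεpos : 0 < ε := by
    rw [hε, Finset.lt_inf'_iff]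
    exact fun t _ => lt_min (hApos t) (hApos' t)
  have hεle1 : ∀ t : ZMod s, ε ≤ A (I t) (J t) := fun t =>
    le_trans (Finset.inf'_le _ (mem_univ t)) (min_le_left _ _)
  have hεle2 : ∀ t : ZMod s, ε ≤ A (I (t + 1)) (J t) := fun t =>
    le_trans (Finset.inf'_le _ (mem_univ t)) (min_le_right _ _)
  set c1 : Fin n → Fin m → ℝ :=
    fun a b => ∑ t : ZMod s, if a = I t ∧ b = J t then 1 else 0 with hc1
  set c2 : Fin n → Fin m → ℝ :=
    fun a b => ∑ t : ZMod s, if a = I (t + 1) ∧ b = J t then 1 else 0 with hc2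
  set D : Fin n → Fin m → ℝ := fun a b => ε * (c1 a b - c2 a b) with hD
  -- bounds on c1, c2
  have hc1nonneg : ∀ a b, 0 ≤ c1 a b :=
    fun a b => Finset.sum_nonneg fun t _ => by positivity
  have hc2nonneg : ∀ a b, 0 ≤ c2 a b :=
    fun a b => Finset.sum_nonneg fun t _ => by positivity
  have hc1le : ∀ a b, c1 a b ≤ 1 := by
    intro a b
    simp only [hc1]
    rw [Finset.sum_boole]
    have : (univ.filter (fun t : ZMod s => a = I t ∧ b = J t)).card ≤ 1 := by
      rw [Finset.card_le_one]
      intro t ht t' ht'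
      simp only [mem_filter] at ht ht'
      exact hJ (ht.2.2.symm.trans ht'.2.2)
    exact_mod_cast this
  have hc2le : ∀ a b, c2 a b ≤ 1 := by
    intro a b
    simp only [hc2]
    rw [Finset.sum_boole]
    have : (univ.filter (fun t : ZMod s => a = I (t + 1) ∧ b = J t)).card ≤ 1 := by
      rw [Finset.card_le_one]
      intro t ht t' ht'
      simp only [mem_filter] at ht ht'
      exact hJ (ht.2.2.symm.trans ht'.2.2)
    exact_mod_cast this
  -- c1 positive implies on-cycle
  have hc1mem : ∀ a b, c1 a b ≠ 0 → 0 < A a b := by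
    intro a b h
    obtain ⟨t, _, ht⟩ := Finset.exists_ne_zero_of_sum_ne_zero h
    have h' : a = I t ∧ b = J t := by
      by_contra hcon
      simp [hcon] at ht
    rw [h'.1, h'.2]
    exact hApos t
  have hc2mem : ∀ a b, c2 a b ≠ 0 → 0 < A a b := by
    intro a b h
    obtain ⟨t, _, ht⟩ := Finset.exists_ne_zero_of_sum_ne_zero h
    have h' : a = I (t + 1) ∧ b = J t := by
      by_contra hcon
      simp [hcon] at ht
    rw [h'.1, h'.2]
    exact hApos' t
  have hεA1 : ∀ a b, c1 a b ≠ 0 → ε ≤ A a b := by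
    intro a b h
    obtain ⟨t, _, ht⟩ := Finset.exists_ne_zero_of_sum_ne_zero h
    have h' : a = I t ∧ b = J t := by
      by_contra hcon
      simp [hcon] at ht
    rw [h'.1, h'.2]; exact hεle1 t
  have hεA2 : ∀ a b, c2 a b ≠ 0 → ε ≤ A a b := by
    intro a b h
    obtain ⟨t, _, ht⟩ := Finset.exists_ne_zero_of_sum_ne_zero h
    have h' : a = I (t + 1) ∧ b = J t := by
      by_contra hcon
      simp [hcon] at ht
    rw [h'.1, h'.2]; exact hεle2 t
  -- row and column sums of c1, c2
  have hc1row : ∀ a, ∑ b, c1 a b = ∑ t : ZMod s, if a = I t then 1 else 0 := by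
    intro a
    simp only [hc1]; rw [Finset.sum_comm]
    refine Finset.sum_congr rfl fun t _ => ?_
    simp only [ite_and]
    by_cases h : a = I t
    · simp [h, Finset.sum_ite_eq']
    · simp [h]
  have hc2row : ∀ a, ∑ b, c2 a b = ∑ t : ZMod s, if a = I (t + 1) then 1 else 0 := by
    intro a
    simp only [hc2]; rw [Finset.sum_comm]
    refine Finset.sum_congr rfl fun t _ => ?_
    simp only [ite_and]
    by_cases h : a = I (t + 1)
    · simp [h, Finset.sum_ite_eq']
    · simp [h]
  have hrowD : ∀ a, ∑ b, D a b = 0 := by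
    intro a
    simp only [hD]
    rw [← Finset.mul_sum]
    have : ∑ b, (c1 a b - c2 a b) = 0 := by
      rw [Finset.sum_sub_distrib, hc1row, hc2row]
      rw [Fintype.sum_equiv (Equiv.addRight (1 : ZMod s))
        (fun t => if a = I (t + 1) then (1 : ℝ) else 0) (fun t => if a = I t then 1 else 0)
        (fun t => rfl)]
      ring
    rw [this, mul_zero]
  have hc1col : ∀ b, ∑ a, c1 a b = ∑ t : ZMod s, if b = J t then 1 else 0 := by
    intro b
    simp only [hc1]; rw [Finset.sum_comm]
    refine Finset.sum_congr rfl fun t _ => ?_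
    simp only [ite_and]
    rw [Finset.sum_ite_eq' univ (I t) (fun _ => if b = J t then (1 : ℝ) else 0)]
    simp
  have hc2col : ∀ b, ∑ a, c2 a b = ∑ t : ZMod s, if b = J t then 1 else 0 := by
    intro b
    simp only [hc2]; rw [Finset.sum_comm]
    refine Finset.sum_congr rfl fun t _ => ?_
    simp only [ite_and]
    rw [Finset.sum_ite_eq' univ (I (t + 1)) (fun _ => if b = J t then (1 : ℝ) else 0)]
    simp
  have hcolD : ∀ b, ∑ a, D a b = 0 := by
    intro b
    simp only [hD]
    rw [← Finset.mul_sum]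
    have : ∑ a, (c1 a b - c2 a b) = 0 := by
      rw [Finset.sum_sub_distrib, hc1col, hc2col]
      ring
    rw [this, mul_zero]
  -- perturbed matrices
  set B : Matrix (Fin n) (Fin m) ℝ := fun a b => A a b + D a b with hB
  set C : Matrix (Fin n) (Fin m) ℝ := fun a b => A a b - D a b with hC
  have hBpos : ∀ a b, 0 ≤ B a b := by
    intro a b
    simp only [hB]
    simp only [hD]
    by_cases h : c2 a b = 0
    · nlinarith [hc1nonneg a b, hpos a b]
    · have h1 := hεA2 a b h
      have h2 := hc2le a b
      have h3 := hc2nonneg a b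
      have h4 := hc1nonneg a b
      nlinarith
  have hCpos : ∀ a b, 0 ≤ C a b := by
    intro a b
    simp only [hC]
    simp only [hD]
    by_cases h : c1 a b = 0
    · nlinarith [hc2nonneg a b, hpos a b]
    · have h1 := hεA1 a b h
      have h2 := hc1le a b
      have h3 := hc1nonneg a b
      have h4 := hc2nonneg a b
      nlinarith
  have hBDSA : IsDSA n m B := by
    refine ⟨hBpos, fun j => ?_, fun i => ?_⟩
    · rw [show (∑ i, B i j) = (∑ i, A i j) + ∑ i, D i j from by
        rw [← Finset.sum_add_distrib]]
      rw [hcols j, hcolD j, add_zero]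
    · rw [show (∑ j, B i j) = (∑ j, A i j) + ∑ j, D i j from by
        rw [← Finset.sum_add_distrib]]
      rw [hrows i, hrowD i, add_zero]
  have hCDSA : IsDSA n m C := by
    refine ⟨hCpos, fun j => ?_, fun i => ?_⟩
    · rw [show (∑ i, C i j) = (∑ i, A i j) - ∑ i, D i j from by
        rw [← Finset.sum_sub_distrib]]
      rw [hcols j, hcolD j, sub_zero]
    · rw [show (∑ j, C i j) = (∑ j, A i j) - ∑ j, D i j from by
        rw [← Finset.sum_sub_distrib]]
      rw [hrows i, hrowD i, sub_zero]
  have hdecomp : A = (1/2 : ℝ) • B + (1 - (1/2 : ℝ)) • C := by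
    funext a b
    simp only [Matrix.add_apply, Matrix.smul_apply, smul_eq_mul, hB, hC, Pi.smul_apply]
    change A a b = (1/2 : ℝ) * (A a b + D a b) + (1 - 1/2 : ℝ) * (A a b - D a b)
    ring
  -- D is nonzero at (I 0, J 0)
  have hD0 : D (I 0) (J 0) = ε := by
    have h1 : c1 (I 0) (J 0) = 1 := by
      simp only [hc1]
      rw [Finset.sum_eq_single (0 : ZMod s)]
      · simp
      · intro t _ ht
        have : J 0 ≠ J t := fun hc => ht (hJ hc.symm)
        simp [this]
      · intro h; exact absurd (mem_univ _) h
    have h2 : c2 (I 0) (J 0) = 0 := by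
      simp only [hc2]
      refine Finset.sum_eq_zero fun t _ => ?_
      have : ¬(I 0 = I (t + 1) ∧ J 0 = J t) := by
        rintro ⟨ha, hb⟩
        have e1 : t + 1 = 0 := hI ha.symm
        have e2 : t = 0 := hJ hb.symm
        rw [e2] at e1
        simp at e1
      simp [this]
    simp only [hD]; rw [h1, h2]
    ring
  rcases hext B C (1/2) hBDSA hCDSA (by norm_num) (by norm_num) hdecomp with h | h
  · have := congrFun (congrFun h (I 0)) (J 0)
    rw [hB] at this
    simp only at this
    rw [hD0] at this
    linarith
  · have := congrFun (congrFun h (I 0)) (J 0)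
    rw [hC] at this
    simp only at this
    rw [hD0] at this
    linarith


lemma entry_pos {n k m : ℕ} (hn : 0 < n) (hm : m = k * n + 1)
    {Ω : Set (Fin n × Fin m)}
    (hrowc : ∀ i : Fin n, ({j : Fin m | (i, j) ∈ Ω}).ncard = k + 1)
    (hnc : ¬ GCycle Ω) (A₀ : Fin n → Fin m → ℝ)
    (hsupp : ∀ a b, A₀ a b ≠ 0 → (a, b) ∈ Ω)
    (hrow : ∀ a, ∑ b, A₀ a b = (m : ℝ)) (hcol : ∀ b, ∑ a, A₀ a b = (n : ℝ))
    {i : Fin n} {j : Fin m} (hij : (i, j) ∈ Ω) : 0 < A₀ i j := by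
  classical
  set E' : (Fin n ⊕ Fin m) → (Fin n ⊕ Fin m) → Prop := Estep (Ω \ {(i, j)}) with hE'
  set U : Set (Fin n ⊕ Fin m) := {v | Relation.ReflTransGen E' (Sum.inr j) v} with hU
  set R : Set (Fin n) := {r | Sum.inl r ∈ U} with hR
  set C : Set (Fin m) := {c | Sum.inr c ∈ U} with hC
  have hjC : j ∈ C := Relation.ReflTransGen.refl
  have hcloseRC : ∀ r ∈ R, ∀ c, (r, c) ∈ Ω → (r, c) ≠ (i, j) → c ∈ C := by
    intro r hr c hrc hne
    exact Relation.ReflTransGen.tail hr (Or.inl ⟨(r, c), ⟨hrc, hne⟩, rfl, rfl⟩)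
  have hcloseCR : ∀ c ∈ C, ∀ r, (r, c) ∈ Ω → (r, c) ≠ (i, j) → r ∈ R := by
    intro c hc r hrc hne
    exact Relation.ReflTransGen.tail hc (Or.inr ⟨(r, c), ⟨hrc, hne⟩, rfl, rfl⟩)
  set ΩU : Set (↥R × ↥C) :=
    {q | ((q.1 : Fin n), (q.2 : Fin m)) ∈ Ω ∧ ((q.1 : Fin n), (q.2 : Fin m)) ≠ (i, j)} with hΩU
  have hncU : ¬ GCycle ΩU := fun hc =>
    hnc (gcycle_map Subtype.val Subtype.val Subtype.val_injective Subtype.val_injective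
      (fun q hq => hq.1) hc)
  haveI : Nonempty ↥C := ⟨⟨j, hjC⟩⟩
  -- connectivity of the reachable part
  have claim : ∀ w, Relation.ReflTransGen E' (Sum.inr j) w →
      ∃ v : ↥R ⊕ ↥C, (Sum.map (Subtype.val) (Subtype.val) v = w) ∧
        Relation.ReflTransGen (Estep ΩU) (Sum.inr ⟨j, hjC⟩) v := by
    intro w hw
    induction hw with
    | refl => exact ⟨Sum.inr ⟨j, hjC⟩, rfl, Relation.ReflTransGen.refl⟩
    | tail hx hstep ih =>
      rename_i x y
      obtain ⟨v, hv, hreach⟩ := ih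
      have hyU : y ∈ U := Relation.ReflTransGen.tail hx hstep
      rcases hstep with ⟨p, hp, hx1, hy1⟩ | ⟨p, hp, hx1, hy1⟩
      · -- x = inl p.1, y = inr p.2
        have hcC : p.2 ∈ C := by rw [hy1] at hyU; exact hyU
        rcases v with a | c
        · have ha : (a : Fin n) = p.1 := by
            rw [hx1] at hv
            simpa using hv
          refine ⟨Sum.inr ⟨p.2, hcC⟩, by simp [hy1], Relation.ReflTransGen.tail hreach ?_⟩
          refine Or.inl ⟨(a, ⟨p.2, hcC⟩), ⟨?_, ?_⟩, rfl, rfl⟩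
          · show ((a : Fin n), p.2) ∈ Ω
            rw [ha]
            exact hp.1
          · show ((a : Fin n), p.2) ≠ (i, j)
            rw [ha]
            exact hp.2
        · rw [hx1] at hv
          exact absurd hv (by simp)
      · -- x = inr p.2, y = inl p.1
        have hrR : p.1 ∈ R := by rw [hy1] at hyU; exact hyU
        rcases v with a | c
        · rw [hx1] at hv
          exact absurd hv (by simp)
        · have hc : (c : Fin m) = p.2 := by
            rw [hx1] at hv
            simpa using hv
          refine ⟨Sum.inl ⟨p.1, hrR⟩, by simp [hy1], Relation.ReflTransGen.tail hreach ?_⟩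
          refine Or.inr ⟨(⟨p.1, hrR⟩, c), ⟨?_, ?_⟩, rfl, rfl⟩
          · show (p.1, (c : Fin m)) ∈ Ω
            rw [hc]
            exact hp.1
          · show (p.1, (c : Fin m)) ≠ (i, j)
            rw [hc]
            exact hp.2
  have hconnU : ∀ v : ↥R ⊕ ↥C,
      Relation.ReflTransGen (Estep ΩU) (Sum.inr ⟨j, hjC⟩) v := by
    intro v
    rcases v with a | c
    · obtain ⟨v', hv', hreach⟩ := claim (Sum.inl (a : Fin n)) a.2
      rcases v' with a' | c'
      · have : (a' : Fin n) = (a : Fin n) := by simpa using hv'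
        have : a' = a := Subtype.ext this
        rwa [← this]
      · exact absurd hv' (by simp)
    · obtain ⟨v', hv', hreach⟩ := claim (Sum.inr (c : Fin m)) c.2
      rcases v' with a' | c'
      · exact absurd hv' (by simp)
      · have : (c' : Fin m) = (c : Fin m) := by simpa using hv'
        have : c' = c := Subtype.ext this
        rwa [← this]
  -- the two counting bounds
  have hcards : Fintype.card ↥R + Fintype.card ↥C = ΩU.ncard + 1 := by
    have le1 := ncard_le_of_no_gcycle hncU
    have le2 := card_ge_of_connected ΩU (Sum.inr ⟨j, hjC⟩) hconnU
    omega
  -- i is not in R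
  have hiR : i ∉ R := by
    intro hiR
    set ΩU' : Set (↥R × ↥C) := {q | ((q.1 : Fin n), (q.2 : Fin m)) ∈ Ω} with hΩU'
    have hncU' : ¬ GCycle ΩU' := fun hc =>
      hnc (gcycle_map Subtype.val Subtype.val Subtype.val_injective Subtype.val_injective
        (fun q hq => hq) hc)
    have le1' := ncard_le_of_no_gcycle hncU'
    have hss : ΩU ⊂ ΩU' := by
      constructor
      · intro q hq; exact hq.1
      · intro hsub
        have h1 : ((⟨i, hiR⟩ : ↥R), (⟨j, hjC⟩ : ↥C)) ∈ ΩU' := hij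
        have h2 := hsub h1
        exact h2.2 rfl
    have hlt : ΩU.ncard < ΩU'.ncard := Set.ncard_lt_ncard hss (Set.toFinite _)
    omega
  -- fiber counts: each row of ΩU has exactly k+1 entries
  have hfib : ∀ r : ↥R, ({c : ↥C | (r, c) ∈ ΩU}).ncard = k + 1 := by
    intro r
    have hrnei : (r : Fin n) ≠ i := fun h => hiR (h ▸ r.2)
    have himg : Subtype.val '' {c : ↥C | (r, c) ∈ ΩU} = {c : Fin m | ((r : Fin n), c) ∈ Ω} := by
      ext c
      constructor
      · rintro ⟨c', hc', rfl⟩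
        exact hc'.1
      · intro hc
        have hne : ((r : Fin n), c) ≠ (i, j) := fun h => hrnei (congrArg Prod.fst h)
        have hcC : c ∈ C := hcloseRC _ r.2 c hc hne
        exact ⟨⟨c, hcC⟩, ⟨hc, hne⟩, rfl⟩
    have := Set.ncard_image_of_injective {c : ↥C | (r, c) ∈ ΩU}
      (Subtype.val_injective (p := fun c => c ∈ C))
    rw [himg] at this
    rw [← this, hrowc r]
  have hcount : ΩU.ncard = Fintype.card ↥R * (k + 1) := by
    rw [ncard_eq_sum_fibers ΩU]
    rw [Finset.sum_congr rfl (fun r _ => hfib r), Finset.sum_const, card_univ, smul_eq_mul]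
  have hCR : Fintype.card ↥C = k * Fintype.card ↥R + 1 := by
    have hexp : Fintype.card ↥R * (k + 1) = k * Fintype.card ↥R + Fintype.card ↥R := by ring
    omega
  -- cardinal of R is less than n
  have hRlt : Fintype.card ↥R < n := by
    have h1 : Fintype.card ↥R = R.ncard := by
      rw [← Nat.card_coe_set_eq, Nat.card_eq_fintype_card]
    have h2 : R ≠ Set.univ := fun h => hiR (h ▸ Set.mem_univ i)
    have h3 : R ⊂ Set.univ := (Set.ssubset_univ_iff).2 h2
    have h4 := Set.ncard_lt_ncard h3 (Set.toFinite _)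
    rw [Set.ncard_univ, Nat.card_eq_fintype_card, Fintype.card_fin] at h4
    omega
  -- now the sum computation
  set Rfin : Finset (Fin n) := R.toFinset with hRfin
  set Cfin : Finset (Fin m) := C.toFinset with hCfin
  have hcardR : Rfin.card = Fintype.card ↥R := Set.toFinset_card R
  have hcardC : Cfin.card = Fintype.card ↥C := Set.toFinset_card C
  -- n * |C| = (sum over C of column sums)
  have key1 : ((n : ℝ)) * Cfin.card = ∑ c ∈ Cfin, ∑ r : Fin n, A₀ r c := by
    rw [Finset.sum_congr rfl fun c _ => hcol c, Finset.sum_const, nsmul_eq_mul]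
    ring
  -- split the inner sums
  have key2 : ∀ c ∈ Cfin, ∑ r : Fin n, A₀ r c =
      (∑ r ∈ Rfin, A₀ r c) + ∑ r ∈ Rfinᶜ, A₀ r c := by
    intro c _
    rw [← Finset.sum_add_sum_compl Rfin]
  have key3 : ∑ c ∈ Cfin, ∑ r ∈ Rfinᶜ, A₀ r c = A₀ i j := by
    have hsingle : ∀ c ∈ Cfin, (∑ r ∈ Rfinᶜ, A₀ r c) = if c = j then A₀ i j else 0 := by
      intro c hc
      have hcC : c ∈ C := by rwa [hCfin, Set.mem_toFinset] at hc
      by_cases hcj : c = j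
      · rw [if_pos hcj, hcj]
        refine Finset.sum_eq_single_of_mem i ?_ ?_
        · rw [Finset.mem_compl, hRfin, Set.mem_toFinset]; exact hiR
        · intro r hr hri
          by_contra hne
          have hrcΩ : (r, j) ∈ Ω := hsupp r j hne
          have hneij : (r, j) ≠ (i, j) := fun h => hri (congrArg Prod.fst h)
          have : r ∈ R := hcloseCR j hjC r hrcΩ hneij
          rw [Finset.mem_compl, hRfin, Set.mem_toFinset] at hr
          exact hr this
      · rw [if_neg hcj]
        refine Finset.sum_eq_zero fun r hr => ?_
        by_contra hne
        have hrcΩ : (r, c) ∈ Ω := hsupp r c hne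
        have hneij : (r, c) ≠ (i, j) := fun h => hcj (congrArg Prod.snd h)
        have : r ∈ R := hcloseCR c hcC r hrcΩ hneij
        rw [Finset.mem_compl, hRfin, Set.mem_toFinset] at hr
        exact hr this
    rw [Finset.sum_congr rfl hsingle]
    rw [Finset.sum_ite_eq' Cfin j (fun _ => A₀ i j)]
    rw [if_pos (by rw [hCfin, Set.mem_toFinset]; exact hjC)]
  have key4 : ∑ c ∈ Cfin, ∑ r ∈ Rfin, A₀ r c = ((m : ℝ)) * Rfin.card := by
    rw [Finset.sum_comm]
    have hrowR : ∀ r ∈ Rfin, ∑ c ∈ Cfin, A₀ r c = (m : ℝ) := by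
      intro r hr
      have hrR : r ∈ R := by rwa [hRfin, Set.mem_toFinset] at hr
      have hrnei : r ≠ i := fun h => hiR (h ▸ hrR)
      rw [← hrow r]
      refine Finset.sum_subset (Finset.subset_univ Cfin) ?_
      intro c _ hcn
      by_contra hne
      have hrcΩ : (r, c) ∈ Ω := hsupp r c hne
      have hneij : (r, c) ≠ (i, j) := fun h => hrnei (congrArg Prod.fst h)
      have : c ∈ C := hcloseRC r hrR c hrcΩ hneij
      rw [hCfin, Set.mem_toFinset] at hcn
      exact hcn this
    rw [Finset.sum_congr rfl hrowR, Finset.sum_const, nsmul_eq_mul]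
    ring
  -- combine
  have hmain : ((n : ℝ)) * Cfin.card = ((m : ℝ)) * Rfin.card + A₀ i j := by
    rw [key1, Finset.sum_congr rfl key2, Finset.sum_add_distrib, key3, key4]
  have hAval : A₀ i j = (n : ℝ) - Rfin.card := by
    have hc' : (Cfin.card : ℝ) = k * Rfin.card + 1 := by
      rw [hcardC, hcardR]
      exact_mod_cast congrArg (Nat.cast (R := ℝ)) hCR
    rw [hc'] at hmain
    have hmr : (m : ℝ) = k * n + 1 := by exact_mod_cast congrArg (Nat.cast (R := ℝ)) hm
    rw [hmr] at hmain
    nlinarith [hmain]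
  rw [hAval]
  have : (Rfin.card : ℝ) < n := by
    rw [hcardR]
    exact_mod_cast hRlt
  linarith


lemma forward_dir {n k m : ℕ} (hn : 0 < n) (hk : 0 < k) (hm : m = k * n + 1)
    {Ω : Set (Fin n × Fin m)} {A : Matrix (Fin n) (Fin m) ℝ}
    (hext : IsExtremal n m A) (hsupp : matSupp n m A = Ω) :
    (∀ i : Fin n, ({j : Fin m | (i, j) ∈ Ω}).ncard = k + 1) ∧ ¬ ContainsCycle n m Ω := by
  classical
  have hnc : ¬ ContainsCycle n m Ω := by rw [← hsupp]; exact no_cycle_of_extremal hext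
  have hncG : ¬ GCycle Ω := hnc
  obtain ⟨⟨hpos, hcols, hrows⟩, -⟩ := hext
  haveI : Nonempty (Fin m) := ⟨⟨0, by omega⟩⟩
  have hub : ∀ a b, A a b ≤ (n : ℝ) := by
    intro a b
    have h := Finset.single_le_sum (f := fun a' => A a' b) (fun a' _ => hpos a' b)
      (Finset.mem_univ a)
    rw [hcols b] at h
    exact h
  have hAzero : ∀ a b, (a, b) ∉ Ω → A a b = 0 := by
    intro a b hab
    by_contra h
    exact hab (hsupp ▸ h)
  have hd : ∀ i : Fin n, k + 1 ≤ ({j : Fin m | (i, j) ∈ Ω}).ncard := by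
    intro i
    set Sfin : Finset (Fin m) := {j : Fin m | (i, j) ∈ Ω}.toFinset with hSfin
    have hcard : Sfin.card = ({j : Fin m | (i, j) ∈ Ω}).ncard :=
      (Set.ncard_eq_toFinset_card' _).symm
    have h1 : (m : ℝ) = ∑ j ∈ Sfin, A i j := by
      rw [← hrows i]
      refine (Finset.sum_subset (Finset.subset_univ Sfin) ?_).symm
      intro c _ hcn
      apply hAzero
      intro hmem
      exact hcn (by rw [hSfin, Set.mem_toFinset]; exact hmem)
    have h2 : ∑ j ∈ Sfin, A i j ≤ (Sfin.card : ℝ) * n := by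
      calc ∑ j ∈ Sfin, A i j ≤ ∑ _j ∈ Sfin, (n : ℝ) :=
            Finset.sum_le_sum fun j _ => hub i j
        _ = (Sfin.card : ℝ) * n := by rw [Finset.sum_const, nsmul_eq_mul]
    have h3 : (m : ℝ) ≤ (Sfin.card : ℝ) * n := h1 ▸ h2
    have h4 : m ≤ Sfin.card * n := by exact_mod_cast h3
    by_contra hcon
    push_neg at hcon
    have h5 : Sfin.card ≤ k := by omega
    have h6 : Sfin.card * n ≤ k * n := Nat.mul_le_mul_right n h5
    omega
  have hsum : ∑ i : Fin n, ({j : Fin m | (i, j) ∈ Ω}).ncard = Ω.ncard :=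
    (ncard_eq_sum_fibers Ω).symm
  have hub2 : Ω.ncard + 1 ≤ n + m := by
    have := ncard_le_of_no_gcycle hncG
    simpa using this
  have hle : ∑ i : Fin n, ({j : Fin m | (i, j) ∈ Ω}).ncard ≤ ∑ _i : Fin n, (k + 1) := by
    rw [hsum, Finset.sum_const, Finset.card_univ, Fintype.card_fin, smul_eq_mul]
    have e : n * (k + 1) = k * n + n := by ring
    omega
  have hge : ∑ _i : Fin n, (k + 1) ≤ ∑ i : Fin n, ({j : Fin m | (i, j) ∈ Ω}).ncard :=
    Finset.sum_le_sum fun i _ => hd i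
  have heq := le_antisymm hge hle
  refine ⟨fun i => ?_, hnc⟩
  exact ((Finset.sum_eq_sum_iff_of_le (fun i _ => hd i)).1 heq i (Finset.mem_univ i)).symm

lemma backward_dir {n k m : ℕ} (hn : 0 < n) (hk : 0 < k) (hm : m = k * n + 1)
    {Ω : Set (Fin n × Fin m)}
    (hrowc : ∀ i : Fin n, ({j : Fin m | (i, j) ∈ Ω}).ncard = k + 1)
    (hnc : ¬ ContainsCycle n m Ω) :
    ∃ A : Matrix (Fin n) (Fin m) ℝ, IsExtremal n m A ∧ matSupp n m A = Ω := by
  classical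
  have hncG : ¬ GCycle Ω := hnc
  haveI : Nonempty (Fin m) := ⟨⟨0, by omega⟩⟩
  haveI : Nonempty (Fin n) := ⟨⟨0, hn⟩⟩
  have hΩcard : Ω.ncard = n * (k + 1) := by
    rw [ncard_eq_sum_fibers Ω, Finset.sum_congr rfl (fun i _ => hrowc i), Finset.sum_const,
      Finset.card_univ, Fintype.card_fin, smul_eq_mul]
  have hcard : Ω.ncard + 1 = Fintype.card (Fin n) + Fintype.card (Fin m) := by
    rw [Fintype.card_fin, Fintype.card_fin, hΩcard]
    have e : n * (k + 1) = k * n + n := by ring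
    omega
  have hbal : ∑ _a : Fin n, (m : ℝ) = ∑ _b : Fin m, (n : ℝ) := by
    rw [Finset.sum_const, Finset.sum_const, Finset.card_univ, Finset.card_univ,
      Fintype.card_fin, Fintype.card_fin, nsmul_eq_mul, nsmul_eq_mul]
    ring
  obtain ⟨A₀, hsupp, hrow, hcol⟩ :=
    exists_matrix hncG hcard (fun _ => (m : ℝ)) (fun _ => (n : ℝ)) hbal
  have hposΩ : ∀ p : Fin n × Fin m, p ∈ Ω → 0 < A₀ p.1 p.2 := by
    intro p hp
    exact entry_pos hn hm hrowc hncG A₀ hsupp hrow hcol hp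
  set A : Matrix (Fin n) (Fin m) ℝ := Matrix.of A₀ with hA
  have hA0 : ∀ a b, (a, b) ∉ Ω → A₀ a b = 0 := by
    intro a b hab
    by_contra h
    exact hab (hsupp a b h)
  have hsuppA : matSupp n m A = Ω := by
    ext p
    constructor
    · intro hp
      exact hsupp p.1 p.2 hp
    · intro hp
      exact (hposΩ p hp).ne'
  have hDSA : IsDSA n m A := by
    refine ⟨?_, fun b => hcol b, fun a => hrow a⟩
    intro a b
    by_cases hab : (a, b) ∈ Ω
    · exact (hposΩ (a, b) hab).le
    · exact le_of_eq (hA0 a b hab).symm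
  refine ⟨A, ⟨hDSA, ?_⟩, hsuppA⟩
  intro B C t hB hC ht ht1 hdec
  left
  have hsuppB : ∀ a b, B a b ≠ 0 → (a, b) ∈ Ω := by
    intro a b hb
    by_contra hab
    have h0 : A a b = 0 := hA0 a b hab
    have hcf := congrFun (congrFun hdec a) b
    simp only [Matrix.add_apply, Matrix.smul_apply, smul_eq_mul] at hcf
    rw [h0] at hcf
    have hBnn := hB.1 a b
    have hCnn := hC.1 a b
    have : B a b = 0 := by nlinarith
    exact hb this
  set D : Fin n → Fin m → ℝ := fun a b => B a b - A a b with hD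
  have hDsupp : ∀ a b, D a b ≠ 0 → (a, b) ∈ Ω := by
    intro a b hd
    by_cases hab : (a, b) ∈ Ω
    · exact hab
    · exfalso
      have h1 : A₀ a b = 0 := hA0 a b hab
      have h2 : B a b = 0 := by
        by_contra h
        exact hab (hsuppB a b h)
      apply hd
      show B a b - A a b = 0
      rw [h2]
      show (0 : ℝ) - A₀ a b = 0
      rw [h1]
      ring
  have hDrow : ∀ a, ∑ b, D a b = 0 := by
    intro a
    simp only [hD]
    rw [Finset.sum_sub_distrib, hB.2.2 a]
    have : ∑ b, A a b = (m : ℝ) := hrow a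
    rw [this, sub_self]
  have hDcol : ∀ b, ∑ a, D a b = 0 := by
    intro b
    simp only [hD]
    rw [Finset.sum_sub_distrib, hB.2.1 b]
    have : ∑ a, A a b = (n : ℝ) := hcol b
    rw [this, sub_self]
  have hzero := zero_of_no_gcycle hncG D hDsupp hDrow hDcol
  funext a b
  have hz := hzero a b
  simp only [hD] at hz
  linarith

/-- For `m = k·n + 1`, a set `Ω` of positions is the support of some
extremal `n × m` doubly stochastic array if and only if every row of `Ω` has
exactly `k + 1` elements and `Ω` contains no cycle. -/
theorem support_structure_kn_plus_one (n k : ℕ) (hn : 0 < n) (hk : 0 < k)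
    (m : ℕ) (hm : m = k * n + 1) (Ω : Set (Fin n × Fin m)) :
    (∃ A : Matrix (Fin n) (Fin m) ℝ, IsExtremal n m A ∧ matSupp n m A = Ω) ↔
      ((∀ i : Fin n, ({j : Fin m | (i, j) ∈ Ω}).ncard = k + 1) ∧
        ¬ ContainsCycle n m Ω) := by
  constructor
  · rintro ⟨A, hext, hsuppA⟩
    exact forward_dir hn hk hm hext hsuppA
  · rintro ⟨hrowc, hnc⟩
    exact backward_dir hn hk hm hrowc hnc
end

section
/- For every integer n ≥ 6, there exist two extremal arrays A and B in S(n, n+1) such that A and B have the same multiset of entries (i.e., the same set of entries counted with multiplicities), but A and B are not equivalent. -/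
/-!
Both arrays have first row `(n - 1, 2, 0, …, 0)`, second row with `3` and `n - 2` in columns
`1` and `2` (in either order), and, for `i ≥ 2`, row `i` with `n` in column `i + 1` and `1` in one
of the columns `0, 1, 2`. The support of such an array is a forest, so it is extremal: peeling
leaves (the columns `≥ 3`, then the rows `≥ 2`, then the path left in the top-left `2 × 3` block)
shows that no nonzero matrix with zero line sums lives on it. `B` arises from `A` by exchanging
columns `1` and `2` inside some rows, so the multisets of entries agree; but in `A` the entry
`n - 2` shares a column with a `1`, and in `B` it does not.
-/

open Finset

def IsRigid {n m : ℕ} (A : Matrix (Fin n) (Fin m) ℝ) : Prop :=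
  ∀ D : Matrix (Fin n) (Fin m) ℝ, (∀ i j, A i j = 0 → D i j = 0) →
    (∀ j, ∑ i, D i j = 0) → (∀ i, ∑ j, D i j = 0) → D = 0

theorem IsDSA.isExtremal_of_isRigid {n m : ℕ} {A : Matrix (Fin n) (Fin m) ℝ}
    (hA : IsDSA n m A) (hrig : IsRigid A) : IsExtremal n m A := by
  refine ⟨hA, fun B C t hB hC ht ht1 hABC => Or.inl ?_⟩
  have hentry : ∀ i j, A i j = t * B i j + (1 - t) * C i j := fun i j => by
    simp [hABC]
  have hsupp : ∀ i j, A i j = 0 → (B - A) i j = 0 := fun i j h => by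
    have hB0 : t * B i j = 0 := by
      linarith [hentry i j, mul_nonneg ht.le (hB.1 i j),
        mul_nonneg (sub_nonneg.2 ht1.le) (hC.1 i j)]
    simp [h, (mul_eq_zero.1 hB0).resolve_left ht.ne']
  refine sub_eq_zero.1 (hrig _ hsupp (fun j => ?_) (fun i => ?_))
  · simp [Finset.sum_sub_distrib, hB.2.1 j, hA.2.1 j]
  · simp [Finset.sum_sub_distrib, hB.2.2 i, hA.2.2 i]

theorem MatEquiv.exists_col_of_exists_col {n m : ℕ} {A B : Matrix (Fin n) (Fin m) ℝ}
    (h : MatEquiv n m A B) {x y : ℝ} (hA : ∃ j i i', A i j = x ∧ A i' j = y) :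
    ∃ j i i', B i j = x ∧ B i' j = y := by
  obtain ⟨σ, τ, hBA⟩ := h
  obtain ⟨j, i, i', hx, hy⟩ := hA
  exact ⟨τ.symm j, σ.symm i, σ.symm i', by simp [hBA, hx], by simp [hBA, hy]⟩

theorem map_entries_eq_of_rowPerm {n m : ℕ} {A B : Matrix (Fin n) (Fin m) ℝ}
    (τ : Fin n → Equiv.Perm (Fin m)) (h : ∀ i j, B i j = A i (τ i j)) :
    (Finset.univ.val.map fun p : Fin n × Fin m => B p.1 p.2) =
      Finset.univ.val.map fun p : Fin n × Fin m => A p.1 p.2 := by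
  conv_rhs => rw [← Multiset.map_univ_val_equiv ((Equiv.refl _).prodShear τ), Multiset.map_map]
  simp only [h]
  rfl

def stairEntry (n : ℕ) (a b : ℝ) (c : ℕ → ℕ) (i j : ℕ) : ℝ :=
  if i = 0 then (if j = 0 then n - 1 else if j = 1 then 2 else 0)
  else if i = 1 then (if j = 1 then a else if j = 2 then b else 0)
  else if j = c i then 1 else if j = i + 1 then n else 0

def stair (n : ℕ) (a b : ℝ) (c : ℕ → ℕ) : Matrix (Fin n) (Fin (n + 1)) ℝ :=
  fun i j => stairEntry n a b c i j

namespace stair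

variable {n : ℕ} {a b : ℝ} {c : ℕ → ℕ}

theorem stairEntry_eq_zero {i j : ℕ}
    (h : ¬ (i = 0 ∧ j ≤ 1 ∨ i = 1 ∧ (j = 1 ∨ j = 2) ∨ 2 ≤ i ∧ (j = c i ∨ j = i + 1))) :
    stairEntry n a b c i j = 0 := by
  simp only [stairEntry]
  split_ifs <;> first | rfl | omega

theorem eq_zero_of_two_le {D : Matrix (Fin n) (Fin (n + 1)) ℝ} (hc : ∀ i, c i ≤ 2)
    (hD : ∀ i j, stair n a b c i j = 0 → D i j = 0)
    (hcol : ∀ j, ∑ i, D i j = 0) (hrow : ∀ i, ∑ j, D i j = 0)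
    {i : Fin n} (hi : 2 ≤ (i : ℕ)) (j : Fin (n + 1)) : D i j = 0 := by
  have hci := hc i
  -- column `i + 1 ≥ 3` meets the support only in row `i`
  have hbig : ∀ j' : Fin (n + 1), (j' : ℕ) = i + 1 → D i j' = 0 := fun j' hj' =>
    (Fintype.sum_eq_single (f := fun i' => D i' j') i fun i' hi' => hD _ _ <|
      stairEntry_eq_zero (by have := hc i'; have := Fin.val_ne_iff.2 hi'; omega)).symm.trans
      (hcol j')
  have hrest : ∀ j' : Fin (n + 1), (j' : ℕ) ≠ c i → D i j' = 0 := fun j' hj' => by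
    by_cases hji : (j' : ℕ) = i + 1
    · exact hbig j' hji
    · exact hD i j' (stairEntry_eq_zero (by omega))
  by_cases hj : (j : ℕ) = c i
  · exact (Fintype.sum_eq_single j fun j' hj' => hrest j' (hj ▸ Fin.val_ne_iff.2 hj')).symm.trans
      (hrow i)
  · exact hrest j hj

theorem isRigid (hc : ∀ i, c i ≤ 2) : IsRigid (stair n a b c) := by
  intro D hD hcol hrow
  have hoff : ∀ (i : Fin n) (j : Fin (n + 1)),
      ¬ ((i : ℕ) = 0 ∧ (j : ℕ) ≤ 1 ∨ (i : ℕ) = 1 ∧ ((j : ℕ) = 1 ∨ (j : ℕ) = 2)) → D i j = 0 := by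
    intro i j h
    by_cases hi : 2 ≤ (i : ℕ)
    · exact eq_zero_of_two_le hc hD hcol hrow hi j
    · exact hD i j (stairEntry_eq_zero (by omega))
  have of_col : ∀ i j, (∀ i', i' ≠ i → D i' j = 0) → D i j = 0 := fun i j h =>
    (Fintype.sum_eq_single (f := fun i' => D i' j) i h).symm.trans (hcol j)
  have of_row : ∀ i j, (∀ j', j' ≠ j → D i j' = 0) → D i j = 0 := fun i j h =>
    (Fintype.sum_eq_single j h).symm.trans (hrow i)
  -- what is left of the support is the path `(0,0) - (0,1) - (1,1) - (1,2)`
  have h00 : ∀ (i : Fin n) (j : Fin (n + 1)), (i : ℕ) = 0 → (j : ℕ) = 0 → D i j = 0 :=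
    fun i j hi hj => of_col i j fun i' hi' =>
      hoff i' j (by have := Fin.val_ne_iff.2 hi'; omega)
  have h01 : ∀ (i : Fin n) (j : Fin (n + 1)), (i : ℕ) = 0 → (j : ℕ) = 1 → D i j = 0 :=
    fun i j hi hj => of_row i j fun j' hj' => by
      by_cases h0 : (j' : ℕ) = 0
      · exact h00 i j' hi h0
      · exact hoff i j' (by have := Fin.val_ne_iff.2 hj'; omega)
  have h12 : ∀ (i : Fin n) (j : Fin (n + 1)), (i : ℕ) = 1 → (j : ℕ) = 2 → D i j = 0 :=
    fun i j hi hj => of_col i j fun i' hi' =>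
      hoff i' j (by have := Fin.val_ne_iff.2 hi'; omega)
  have h11 : ∀ (i : Fin n) (j : Fin (n + 1)), (i : ℕ) = 1 → (j : ℕ) = 1 → D i j = 0 :=
    fun i j hi hj => of_row i j fun j' hj' => by
      by_cases h2 : (j' : ℕ) = 2
      · exact h12 i j' hi h2
      · exact hoff i j' (by have := Fin.val_ne_iff.2 hj'; omega)
  ext i j
  by_cases hpat : (i : ℕ) = 0 ∧ (j : ℕ) ≤ 1 ∨ (i : ℕ) = 1 ∧ ((j : ℕ) = 1 ∨ (j : ℕ) = 2)
  · rcases hpat with ⟨hi0, hj⟩ | ⟨hi1, hj | hj⟩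
    · rcases Nat.le_one_iff_eq_zero_or_eq_one.1 hj with hj | hj
      exacts [h00 i j hi0 hj, h01 i j hi0 hj]
    exacts [h11 i j hi1 hj, h12 i j hi1 hj]
  · exact hoff i j hpat

theorem sum_row (hab : a + b = n + 1) (hc : ∀ i, c i ≤ 2) (i : Fin n) :
    ∑ j, stair n a b c i j = n + 1 := by
  have hsum : ∀ p q (hp : p < n + 1) (hq : q < n + 1), p ≠ q →
      (∀ j : Fin (n + 1), (j : ℕ) ≠ p → (j : ℕ) ≠ q → stair n a b c i j = 0) →
      ∑ j, stair n a b c i j = stair n a b c i ⟨p, hp⟩ + stair n a b c i ⟨q, hq⟩ :=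
    fun p q hp hq hpq h => Fintype.sum_eq_add _ _ (by simpa using hpq) fun j hj =>
      h j (fun h' => hj.1 (Fin.ext h')) (fun h' => hj.2 (Fin.ext h'))
  have hi := i.isLt
  have hci := hc i
  by_cases hi0 : (i : ℕ) = 0
  · rw [hsum 0 1 (by omega) (by omega) (by simp) fun j h0 h1 => stairEntry_eq_zero (by omega)]
    simp only [stair, stairEntry, hi0, ↓reduceIte, one_ne_zero]
    ring
  by_cases hi1 : (i : ℕ) = 1
  · rw [hsum 1 2 (by omega) (by omega) (by simp) fun j h0 h1 => stairEntry_eq_zero (by omega)]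
    simpa [stair, stairEntry, hi1] using hab
  · rw [hsum (c i) (i + 1) (by omega) (by omega) (by omega)
      fun j h0 h1 => stairEntry_eq_zero (by omega)]
    simp only [stair, stairEntry, hi0, hi1, ↓reduceIte, show (i : ℕ) + 1 ≠ c i by omega]
    ring

theorem sum_col_eq_add_sum_Ico (hn : 2 ≤ n) (j : ℕ) :
    ∑ i : Fin n, stairEntry n a b c i j =
      stairEntry n a b c 0 j + stairEntry n a b c 1 j +
        ∑ i ∈ Ico 2 n, stairEntry n a b c i j := by
  rw [Fin.sum_univ_eq_sum_range (fun i => stairEntry n a b c i j),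
    ← Finset.sum_range_add_sum_Ico _ hn]
  simp [Finset.sum_range_succ]

theorem sum_Ico_stairEntry_of_le_two {j : ℕ} (hj : j ≤ 2) :
    ∑ i ∈ Ico 2 n, stairEntry n a b c i j = #{i ∈ Ico 2 n | c i = j} := by
  rw [← Finset.sum_boole]
  refine Finset.sum_congr rfl fun i hi => ?_
  have := (Finset.mem_Ico.1 hi).1
  simp only [stairEntry, eq_comm (a := j)]
  split_ifs <;> first | rfl | omega

theorem sum_Ico_stairEntry_of_three_le {j : ℕ} (hc : ∀ i, c i ≤ 2) (hj : 3 ≤ j) (hjn : j ≤ n) :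
    ∑ i ∈ Ico 2 n, stairEntry n a b c i j = n := by
  rw [Finset.sum_eq_single_of_mem (j - 1) (Finset.mem_Ico.2 ⟨by omega, by omega⟩)]
  · have := hc (j - 1)
    simp only [stairEntry]
    split_ifs <;> first | rfl | omega
  · intro i hi hij
    have := (Finset.mem_Ico.1 hi).1
    exact stairEntry_eq_zero (by have := hc i; omega)

theorem isDSA (hn : 2 ≤ n) (ha : 0 ≤ a) (hb : 0 ≤ b) (hab : a + b = n + 1)
    (hc : ∀ i, c i ≤ 2) (h0 : #{i ∈ Ico 2 n | c i = 0} = 1)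
    (h1 : 2 + a + #{i ∈ Ico 2 n | c i = 1} = n) (h2 : b + #{i ∈ Ico 2 n | c i = 2} = n) :
    IsDSA n (n + 1) (stair n a b c) := by
  have hn' : (2 : ℝ) ≤ n := by exact_mod_cast hn
  refine ⟨fun i j => ?_, fun j => ?_, fun i => by rw [sum_row hab hc]; push_cast; ring⟩
  · simp only [stair, stairEntry]
    split_ifs <;> first | exact ha | exact hb | linarith
  · simp only [stair]
    rw [sum_col_eq_add_sum_Ico hn]
    have hj := j.isLt
    by_cases hj2 : (j : ℕ) ≤ 2
    · rw [sum_Ico_stairEntry_of_le_two hj2]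
      interval_cases (j : ℕ) <;> simp [stairEntry, h0] <;> linarith
    · rw [sum_Ico_stairEntry_of_three_le hc (by omega) (by omega),
        stairEntry_eq_zero (by omega), stairEntry_eq_zero (by omega)]
      ring

end stair

def oneColA (n i : ℕ) : ℕ := if i = 2 then 0 else if i + 3 ≤ n then 1 else 2

def oneColB (i : ℕ) : ℕ := if i = 2 then 0 else 2

def arrayA (n : ℕ) : Matrix (Fin n) (Fin (n + 1)) ℝ := stair n 3 (n - 2) (oneColA n)

def arrayB (n : ℕ) : Matrix (Fin n) (Fin (n + 1)) ℝ := stair n (n - 2) 3 oneColB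

theorem oneColA_le (n i : ℕ) : oneColA n i ≤ 2 := by unfold oneColA; split_ifs <;> omega

theorem oneColB_le (i : ℕ) : oneColB i ≤ 2 := by unfold oneColB; split_ifs <;> omega

section

variable {n : ℕ}

theorem isExtremal_arrayA (hn : 5 ≤ n) : IsExtremal n (n + 1) (arrayA n) := by
  have h0 : {i ∈ Ico 2 n | oneColA n i = 0} = {2} := by
    ext i; simp only [mem_filter, mem_Ico, mem_singleton]; unfold oneColA
    split_ifs <;> simp <;> omega
  have h1 : {i ∈ Ico 2 n | oneColA n i = 1} = Ico 3 (n - 2) := by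
    ext i; simp only [mem_filter, mem_Ico]; unfold oneColA
    split_ifs <;> simp <;> omega
  have h2 : {i ∈ Ico 2 n | oneColA n i = 2} = Ico (n - 2) n := by
    ext i; simp only [mem_filter, mem_Ico]; unfold oneColA
    split_ifs <;> simp <;> omega
  have hn' : (5 : ℝ) ≤ n := by exact_mod_cast hn
  refine (stair.isDSA (by omega) (by norm_num) (by linarith) (by ring) (oneColA_le n)
    (by rw [h0, card_singleton]) ?_ ?_).isExtremal_of_isRigid (stair.isRigid (oneColA_le n))
  · rw [h1, Nat.card_Ico, Nat.cast_sub (by omega), Nat.cast_sub (by omega)]; push_cast; ring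
  · rw [h2, Nat.card_Ico, Nat.cast_sub (by omega), Nat.cast_sub (by omega)]; push_cast; ring

theorem isExtremal_arrayB (hn : 3 ≤ n) : IsExtremal n (n + 1) (arrayB n) := by
  have h0 : {i ∈ Ico 2 n | oneColB i = 0} = {2} := by
    ext i; simp only [mem_filter, mem_Ico, mem_singleton]; unfold oneColB
    split_ifs <;> simp <;> omega
  have h1 : {i ∈ Ico 2 n | oneColB i = 1} = ∅ := by
    ext i; simp only [mem_filter, mem_Ico]; unfold oneColB
    split_ifs <;> simp
  have h2 : {i ∈ Ico 2 n | oneColB i = 2} = Ico 3 n := by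
    ext i; simp only [mem_filter, mem_Ico]; unfold oneColB
    split_ifs <;> simp <;> omega
  have hn' : (3 : ℝ) ≤ n := by exact_mod_cast hn
  refine (stair.isDSA (by omega) (by linarith) (by norm_num) (by ring) oneColB_le
    (by rw [h0, card_singleton]) ?_ ?_).isExtremal_of_isRigid (stair.isRigid oneColB_le)
  · rw [h1, card_empty]; push_cast; ring
  · rw [h2, Nat.card_Ico, Nat.cast_sub (by omega)]; push_cast; ring

theorem arrayB_apply_eq (hn : 2 ≤ n) (i : Fin n) (j : Fin (n + 1)) :
    arrayB n i j = arrayA n i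
      ((if (i : ℕ) = 1 ∨ 3 ≤ (i : ℕ) ∧ (i : ℕ) + 3 ≤ n then
        Equiv.swap ⟨1, by omega⟩ ⟨2, by omega⟩ else Equiv.refl _) j) := by
  have hi := i.isLt
  split_ifs with hrow
  · rw [Equiv.swap_apply_def]
    simp only [arrayA, arrayB, stair, stairEntry, oneColA, oneColB, Fin.ext_iff]
    split_ifs <;> simp_all
  · simp only [arrayA, arrayB, stair, stairEntry, oneColA, oneColB, Equiv.refl_apply]
    split_ifs <;> simp_all <;> omega

theorem entries_arrayB (hn : 2 ≤ n) :
    (Finset.univ.val.map fun p : Fin n × Fin (n + 1) => arrayB n p.1 p.2) =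
      Finset.univ.val.map fun p : Fin n × Fin (n + 1) => arrayA n p.1 p.2 :=
  map_entries_eq_of_rowPerm _ (arrayB_apply_eq hn)

theorem exists_col_arrayA (hn : 5 ≤ n) :
    ∃ j i i', arrayA n i j = n - 2 ∧ arrayA n i' j = 1 :=
  ⟨⟨2, by omega⟩, ⟨1, by omega⟩, ⟨n - 2, by omega⟩, by simp [arrayA, stair, stairEntry],
    by simp only [arrayA, stair, stairEntry, oneColA]; split_ifs <;> first | rfl | omega⟩

theorem not_exists_col_arrayB (hn : 6 ≤ n) :
    ¬ ∃ j i i', arrayB n i j = n - 2 ∧ arrayB n i' j = 1 := by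
  rintro ⟨j, i, i', hi, hi'⟩
  have hn' : (6 : ℝ) ≤ n := by exact_mod_cast hn
  have hj : (j : ℕ) = 1 := by
    simp only [arrayB, stair, stairEntry, oneColB] at hi
    split_ifs at hi <;> first | omega | linarith
  simp only [arrayB, stair, stairEntry, oneColB] at hi'
  split_ifs at hi' <;> first | omega | linarith

end

/-- For every `n ≥ 6` there exist two extremal arrays in
`S(n, n+1)` with the same multiset of entries that are not equivalent. -/
theorem exists_nonequivalent_extremal_same_entries (n : ℕ) (hn : 6 ≤ n) :
    ∃ A B : Matrix (Fin n) (Fin (n + 1)) ℝ,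
      IsExtremal n (n + 1) A ∧ IsExtremal n (n + 1) B ∧
      (Finset.univ.val.map fun p : Fin n × Fin (n + 1) => A p.1 p.2) =
        (Finset.univ.val.map fun p : Fin n × Fin (n + 1) => B p.1 p.2) ∧
      ¬ MatEquiv n (n + 1) A B :=
  ⟨arrayA n, arrayB n, isExtremal_arrayA (by omega), isExtremal_arrayB (by omega),
    (entries_arrayB (by omega)).symm,
    fun h => not_exists_col_arrayB hn (h.exists_col_of_exists_col (exists_col_arrayA (by omega)))⟩
end

section
/- Let A be an extremal n × m doubly stochastic array. Then every entry of A is an integral multiple of gcd(n, m); in particular A is an integer matrix. -/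
/-!
An extremal array has no cycle in its support: adding and subtracting a small multiple of the
matrix that is `+1` and `-1` alternately along a cycle preserves all line sums and nonnegativity,
which exhibits the array as a proper midpoint.

Let `d = gcd n m`, so that every line sum of `A` lies in `dℤ`. A line whose sum lies in `dℤ`
cannot contain exactly one entry outside `dℤ`. So if some entry of `A` were not in `dℤ`, the
positions of such entries would form a nonempty subset of the support in which every position has
a partner in its row and a partner in its column. Moving alternately to such partners gives a
non-backtracking walk, and its first repetition closes a cycle.
-/

open Filter Topology

theorem exists_ne_notMem_of_sum_mem {ι G : Type*} [Fintype ι] [AddCommGroup G]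
    {H : AddSubgroup G} {f : ι → G} {a : ι} (hsum : ∑ x, f x ∈ H) (ha : f a ∉ H) :
    ∃ b ≠ a, f b ∉ H := by
  classical
  by_contra! h
  rw [← Finset.add_sum_erase _ f (Finset.mem_univ a)] at hsum
  exact ha <| (H.add_mem_cancel_right <|
    H.sum_mem fun b hb => h b (Finset.ne_of_mem_erase hb)).mp hsum

theorem natCast_mem_zmultiples_natCast {R : Type*} [Ring R] {a b : ℕ} (h : a ∣ b) :
    (b : R) ∈ AddSubgroup.zmultiples (a : R) := by
  obtain ⟨k, rfl⟩ := h
  exact ⟨k, by simpa using Nat.cast_comm (α := R) k a⟩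

section Walks

variable {n m : ℕ} {Ω : Set (Fin n × Fin m)} {r : ℕ → Fin n} {c : ℕ → Fin m}

def IsWalk (Ω : Set (Fin n × Fin m)) (r : ℕ → Fin n) (c : ℕ → Fin m) : Prop :=
  ∀ k, (r k, c k) ∈ Ω ∧ (r (k + 1), c k) ∈ Ω

theorem ContainsCycle.mono {Ω' : Set (Fin n × Fin m)} (h : ContainsCycle n m Ω)
    (hΩ : Ω ⊆ Ω') : ContainsCycle n m Ω' := by
  obtain ⟨s, hs, i, j, hi, hj, hcyc⟩ := h
  exact ⟨s, hs, i, j, hi, hj, fun t => ⟨hΩ (hcyc t).1, hΩ (hcyc t).2⟩⟩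

theorem ContainsCycle.of_swap (h : ContainsCycle m n (Prod.swap ⁻¹' Ω)) :
    ContainsCycle n m Ω := by
  obtain ⟨s, hs, i, j, hi, hj, hcyc⟩ := h
  exact ⟨s, hs, j, fun t => i (t + 1), hj, hi.comp (add_left_injective 1),
    fun t => ⟨(hcyc t).2, (hcyc (t + 1)).1⟩⟩

theorem IsWalk.swap (h : IsWalk Ω r c) : IsWalk (Prod.swap ⁻¹' Ω) c (fun k => r (k + 1)) :=
  fun k => ⟨(h k).2, (h (k + 1)).1⟩

theorem IsWalk.containsCycle_of_eq (h : IsWalk Ω r c) {a b : ℕ} (hab : a + 2 ≤ b)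
    (hr : Set.InjOn r (Set.Ico a b)) (hc : Set.InjOn c (Set.Ico a b)) (hrep : r b = r a) :
    ContainsCycle n m Ω := by
  have : NeZero (b - a) := ⟨by omega⟩
  have hmem (t : ZMod (b - a)) : a + t.val ∈ Set.Ico a b :=
    ⟨by omega, by have := ZMod.val_lt t; omega⟩
  refine ⟨b - a, by omega, fun t => r (a + t.val), fun t => c (a + t.val),
    fun t t' htt' => ZMod.val_injective _ (Nat.add_left_cancel (hr (hmem t) (hmem t') htt')),
    fun t t' htt' => ZMod.val_injective _ (Nat.add_left_cancel (hc (hmem t) (hmem t') htt')),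
    fun t => ⟨(h _).1, ?_⟩⟩
  have hsucc : (t + 1).val = (t.val + 1) % (b - a) := by
    rw [ZMod.val_add, ZMod.val_one_eq_one_mod, Nat.add_mod_mod]
  show (r (a + (t + 1).val), c (a + t.val)) ∈ Ω
  rcases Nat.lt_or_ge (t.val + 1) (b - a) with hlt | hge
  · rw [hsucc, Nat.mod_eq_of_lt hlt]
    exact (h _).2
  · have hlast : a + t.val + 1 = b := by have := ZMod.val_lt t; omega
    rw [hsucc, show t.val + 1 = b - a by omega, Nat.mod_self, add_zero, ← hrep]
    simpa only [hlast] using (h (a + t.val)).2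

theorem IsWalk.containsCycle (h : IsWalk Ω r c) (hr : ∀ k, r (k + 1) ≠ r k)
    (hc : ∀ k, c (k + 1) ≠ c k) : ContainsCycle n m Ω := by
  classical
  have hrep : ∃ b, ∃ a < b, r a = r b ∨ c a = c b := by
    obtain ⟨a, b, hne, hab⟩ := Finite.exists_ne_map_eq_of_infinite r
    rcases hne.lt_or_gt with hlt | hlt
    exacts [⟨b, a, hlt, .inl hab⟩, ⟨a, b, hlt, .inl hab.symm⟩]
  set b := Nat.find hrep
  have hinj {α : Type} (f : ℕ → α) (hf : ∀ l < b, ∀ k < l, f k ≠ f l) :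
      Set.InjOn f (Set.Iio b) := by
    intro k hk l hl hkl
    by_contra hne
    rcases Nat.lt_or_gt_of_ne hne with hlt | hlt
    exacts [hf l hl k hlt hkl, hf k hk l hlt hkl.symm]
  have hrb : Set.InjOn r (Set.Iio b) :=
    hinj r fun l hl k hk hkl => Nat.find_min hrep hl ⟨k, hk, .inl hkl⟩
  have hcb : Set.InjOn c (Set.Iio b) :=
    hinj c fun l hl k hk hkl => Nat.find_min hrep hl ⟨k, hk, .inr hkl⟩
  by_cases hrow : ∃ a < b, r a = r b
  · obtain ⟨a, hab, hra⟩ := hrow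
    have hab2 : a + 2 ≤ b := by
      by_contra
      exact hr a (by rw [show a + 1 = b by omega]; exact hra.symm)
    exact h.containsCycle_of_eq hab2 (hrb.mono Set.Ico_subset_Iio_self)
      (hcb.mono Set.Ico_subset_Iio_self) hra.symm
  · -- A column repeats first, so the transposed walk has a row repeat.
    push Not at hrow
    obtain ⟨a, hab, hrc⟩ := Nat.find_spec hrep
    have hca := hrc.resolve_left (hrow a hab)
    have hab2 : a + 2 ≤ b := by
      by_contra
      exact hc a (by rw [show a + 1 = b by omega]; exact hca.symm)
    have hrb' : Set.InjOn r (Set.Iic b) := by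
      rw [← Set.Iio_insert]
      exact (Set.injOn_insert Set.self_notMem_Iio).2 ⟨hrb, fun ⟨k, hk, hkb⟩ => hrow k hk hkb⟩
    exact ContainsCycle.of_swap <| h.swap.containsCycle_of_eq hab2
      (hcb.mono Set.Ico_subset_Iio_self)
      (hrb'.comp (add_left_injective 1).injOn fun k hk => Set.mem_Iic.2 hk.2) hca.symm

theorem containsCycle_of_forall_exists_ne (hne : Ω.Nonempty)
    (hrow : ∀ p ∈ Ω, ∃ j ≠ p.2, (p.1, j) ∈ Ω) (hcol : ∀ p ∈ Ω, ∃ i ≠ p.1, (i, p.2) ∈ Ω) :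
    ContainsCycle n m Ω := by
  have hstep (p : Ω) : ∃ q : Ω, (q.1.1, p.1.2) ∈ Ω ∧ q.1.1 ≠ p.1.1 ∧ q.1.2 ≠ p.1.2 := by
    obtain ⟨i, hi, hiΩ⟩ := hcol _ p.2
    obtain ⟨j, hj, hjΩ⟩ := hrow _ hiΩ
    exact ⟨⟨(i, j), hjΩ⟩, hiΩ, hi, hj⟩
  choose g hg using hstep
  let w (k : ℕ) : Ω := g^[k] ⟨_, hne.some_mem⟩
  have hw (k : ℕ) : w (k + 1) = g (w k) := Function.iterate_succ_apply' ..
  refine IsWalk.containsCycle (r := fun k => (w k).1.1) (c := fun k => (w k).1.2)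
    (fun k => ⟨(w k).2, ?_⟩) (fun k => ?_) (fun k => ?_) <;> simp only [hw]
  exacts [(hg _).1, (hg _).2.1, (hg _).2.2]

end Walks

section CycleMatrix

variable {n m s : ℕ} [NeZero s] (i : ZMod s → Fin n) (j : ZMod s → Fin m)

def cycleMatrix : Matrix (Fin n) (Fin m) ℝ := fun p q =>
  ∑ t, ((if p = i t ∧ q = j t then 1 else 0) - if p = i (t + 1) ∧ q = j t then 1 else 0)

theorem sum_cycleMatrix_col (q : Fin m) : ∑ p, cycleMatrix i j p q = 0 := by
  simp only [cycleMatrix]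
  rw [Finset.sum_comm]
  simp [Finset.sum_sub_distrib, ite_and]

theorem sum_cycleMatrix_row (p : Fin n) : ∑ q, cycleMatrix i j p q = 0 := by
  simp only [cycleMatrix]
  rw [Finset.sum_comm]
  simp only [Finset.sum_sub_distrib, ite_and, Finset.sum_ite_irrel, Finset.sum_ite_eq',
    Finset.mem_univ, if_true, Finset.sum_const_zero]
  rw [sub_eq_zero]
  exact (Fintype.sum_equiv (Equiv.addRight 1) _ _ fun _ => rfl).symm

theorem exists_of_cycleMatrix_ne_zero {p : Fin n} {q : Fin m} (h : cycleMatrix i j p q ≠ 0) :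
    ∃ t, (p = i t ∧ q = j t) ∨ (p = i (t + 1) ∧ q = j t) := by
  contrapose h
  simp only [not_exists, not_or] at h
  exact Finset.sum_eq_zero fun t _ => by simp [(h t).1, (h t).2]

theorem cycleMatrix_apply_zero [Fact (1 < s)] (hi : Function.Injective i)
    (hj : Function.Injective j) : cycleMatrix i j (i 0) (j 0) = 1 := by
  simp only [cycleMatrix, hi.eq_iff, hj.eq_iff, and_self, Finset.sum_sub_distrib,
    Finset.sum_ite_eq, Finset.mem_univ, ↓reduceIte, Finset.sum_boole, sub_eq_self,
    Nat.cast_eq_zero, Finset.card_eq_zero, Finset.filter_eq_empty_iff, not_and, forall_const]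
  rintro t h rfl
  exact zero_ne_one (h.trans (zero_add 1))

end CycleMatrix

section Extremal

variable {n m : ℕ} {A E : Matrix (Fin n) (Fin m) ℝ}

theorem IsDSA.add_smul (hA : IsDSA n m A) (hcol : ∀ q, ∑ p, E p q = 0)
    (hrow : ∀ p, ∑ q, E p q = 0) {c : ℝ} (hnonneg : ∀ p q, 0 ≤ A p q + c * E p q) :
    IsDSA n m (A + c • E) := by
  refine ⟨hnonneg, fun q => ?_, fun p => ?_⟩
  · simp [Finset.sum_add_distrib, ← Finset.mul_sum, hA.2.1 q, hcol q]
  · simp [Finset.sum_add_distrib, ← Finset.mul_sum, hA.2.2 p, hrow p]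

theorem IsExtremal.eq_zero_of_sums_eq_zero (hA : IsExtremal n m A)
    (hcol : ∀ q, ∑ p, E p q = 0) (hrow : ∀ p, ∑ q, E p q = 0)
    (hsupp : ∀ p q, A p q = 0 → E p q = 0) : E = 0 := by
  have hsmall : ∀ᶠ ε in 𝓝[>] (0 : ℝ), 0 < ε ∧ ∀ p q, ε * |E p q| ≤ A p q := by
    refine eventually_mem_nhdsWithin.and <|
      eventually_all.2 fun p => eventually_all.2 fun q => ?_
    rcases (hA.1.1 p q).eq_or_lt with h | h
    · exact .of_forall fun ε => by simp [← h, hsupp p q h.symm]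
    · have : Tendsto (fun ε : ℝ => ε * |E p q|) (𝓝[>] 0) (𝓝 0) :=
        ((continuous_mul_const _).tendsto' 0 0 (zero_mul _)).mono_left nhdsWithin_le_nhds
      exact (this.eventually_lt_const h).mono fun _ => le_of_lt
  obtain ⟨ε, hε, hεA⟩ := hsmall.exists
  have hB := hA.1.add_smul hcol hrow (c := ε) fun p q => by
    nlinarith [hεA p q, neg_abs_le (E p q)]
  have hC := hA.1.add_smul hcol hrow (c := -ε) fun p q => by
    nlinarith [hεA p q, le_abs_self (E p q)]
  have hmid : A = (1 / 2 : ℝ) • (A + ε • E) + (1 - 1 / 2 : ℝ) • (A + (-ε) • E) := by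
    module
  rcases hA.2 _ _ _ hB hC (by norm_num) (by norm_num) hmid with h | h
  · exact (smul_eq_zero.mp (add_eq_left.mp h)).resolve_left hε.ne'
  · exact (smul_eq_zero.mp (add_eq_left.mp h)).resolve_left (neg_ne_zero.mpr hε.ne')

theorem IsExtremal.not_containsCycle (hA : IsExtremal n m A) :
    ¬ ContainsCycle n m (matSupp n m A) := by
  rintro ⟨s, hs, i, j, hi, hj, hcyc⟩
  have : Fact (1 < s) := ⟨hs⟩
  have hzero : cycleMatrix i j = 0 :=
    hA.eq_zero_of_sums_eq_zero (sum_cycleMatrix_col i j) (sum_cycleMatrix_row i j)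
      fun p q hpq => by
        by_contra hE
        obtain ⟨t, ⟨rfl, rfl⟩ | ⟨rfl, rfl⟩⟩ := exists_of_cycleMatrix_ne_zero i j hE
        exacts [(hcyc t).1 hpq, (hcyc t).2 hpq]
  simpa [hzero] using cycleMatrix_apply_zero i j hi hj

end Extremal

/-- Every entry of an extremal doubly stochastic array is an
integral multiple of `gcd(n,m)`; in particular the array is integer valued. -/
theorem extremal_entries_multiple_of_gcd (n m : ℕ)
    (A : Matrix (Fin n) (Fin m) ℝ) (hA : IsExtremal n m A) :
    ∀ i j, (∃ z : ℤ, A i j = (z : ℝ) * (Nat.gcd n m : ℝ)) ∧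
      (∃ w : ℤ, A i j = (w : ℝ)) := by
  set H := AddSubgroup.zmultiples (Nat.gcd n m : ℝ)
  have hmem : ∀ i j, A i j ∈ H := by
    by_contra! ⟨i, j, hij⟩
    refine hA.not_containsCycle <| ContainsCycle.mono (Ω := {p | A p.1 p.2 ∉ H})
      (containsCycle_of_forall_exists_ne ⟨(i, j), hij⟩ (fun p hp => ?_) (fun p hp => ?_))
      fun p hp h0 => hp (h0 ▸ H.zero_mem)
    · refine exists_ne_notMem_of_sum_mem ?_ hp
      rw [hA.1.2.2]
      exact natCast_mem_zmultiples_natCast (Nat.gcd_dvd_right n m)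
    · refine exists_ne_notMem_of_sum_mem (f := fun i => A i p.2) ?_ hp
      rw [hA.1.2.1]
      exact natCast_mem_zmultiples_natCast (Nat.gcd_dvd_left n m)
  intro i j
  obtain ⟨z, hz⟩ := AddSubgroup.mem_zmultiples_iff.mp (hmem i j)
  rw [← hz, zsmul_eq_mul]
  exact ⟨⟨z, rfl⟩, ⟨z * Nat.gcd n m, by push_cast; rfl⟩⟩
end

section
/- Let n and k be positive integers and m = k·n. If A is an extremal n × m doubly stochastic array, then every nonzero entry of A is equal to n, every row of A contains exactly k nonzero entries, and every column of A contains exactly one nonzero entry; consequently A is equivalent to the block diagonal matrix whose i-th row has the value n in columns (i−1)k+1, …, ik and zeros elsewhere. -/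
open Finset


private lemma sum_two_mul (f : ℕ → ℝ) (N : ℕ) :
    ∑ t ∈ Finset.range (2 * N), f t = ∑ s ∈ Finset.range N, (f (2 * s) + f (2 * s + 1)) := by
  induction N with
  | zero => simp
  | succ N ih =>
    have h : 2 * (N + 1) = (2 * N + 1) + 1 := by ring
    rw [h, Finset.sum_range_succ, Finset.sum_range_succ, ih, Finset.sum_range_succ]
    ring

private lemma sum_shift (f : ℕ → ℝ) (L : ℕ) (hL : 0 < L) :
    ∑ t ∈ Finset.range L, f ((t + 1) % L) = ∑ t ∈ Finset.range L, f t := by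
  obtain ⟨M, rfl⟩ : ∃ M, L = M + 1 := ⟨L - 1, by omega⟩
  rw [Finset.sum_range_succ, Finset.sum_range_succ' f]
  congr 1
  · apply Finset.sum_congr rfl
    intro t ht
    simp only [Finset.mem_range] at ht
    rw [Nat.mod_eq_of_lt (by omega)]
  · simp

private lemma par_mod (L : ℕ) (hL : L % 2 = 0) (x : ℕ) : x % L % 2 = x % 2 := by
  have h1 : x = L * (x / L) + x % L := (Nat.div_add_mod x L).symm
  have h2 : (L * (x / L)) % 2 = 0 := by
    have : 2 ∣ L * (x / L) := Dvd.dvd.mul_right (by omega) _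
    omega
  set z := L * (x / L)
  omega

private lemma no_cycle {n m : ℕ} {A : Matrix (Fin n) (Fin m) ℝ} (hA : IsExtremal n m A)
    (L : ℕ) (hL2 : 0 < L) (hLe : L % 2 = 0) (w : ℕ → Fin n × Fin m)
    (hpos : ∀ t < L, 0 < A (w t).1 (w t).2)
    (hinj : ∀ t < L, ∀ t' < L, w t = w t' → t = t')
    (hcol : ∀ t < L, t % 2 = 0 → (w ((t + 1) % L)).2 = (w t).2)
    (hrow : ∀ t < L, t % 2 = 1 → (w ((t + 1) % L)).1 = (w t).1) : False := by
  classical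
  obtain ⟨N, rfl⟩ : ∃ N, L = 2 * N := ⟨L / 2, by omega⟩
  set L := 2 * N with hLdef
  have hN : 0 < N := by omega
  obtain ⟨⟨hA1, hA2, hA3⟩, hExt⟩ := hA
  set D : Matrix (Fin n) (Fin m) ℝ :=
    fun i j => ∑ t ∈ Finset.range L, (if w t = (i, j) then (-1 : ℝ)^t else 0) with hDdef
  have hDval : ∀ t < L, D (w t).1 (w t).2 = (-1 : ℝ)^t := by
    intro t ht
    show ∑ t' ∈ Finset.range L, (if w t' = ((w t).1, (w t).2) then (-1 : ℝ)^t' else 0) = _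
    rw [Finset.sum_eq_single t]
    · rw [if_pos Prod.mk.eta.symm]
    · intro b hb hbt
      exact if_neg (fun hc => hbt (hinj b (Finset.mem_range.mp hb) t ht (by rw [hc])))
    · intro h; exact absurd (Finset.mem_range.mpr ht) h
  have hD0 : ∀ i j, (∀ t < L, w t ≠ (i, j)) → D i j = 0 := by
    intro i j h
    apply Finset.sum_eq_zero
    intro t ht
    rw [if_neg (h t (Finset.mem_range.mp ht))]
  -- row sums of D vanish
  have hrowD : ∀ i, ∑ j, D i j = 0 := by
    intro i
    set f : ℕ → ℝ := fun t => if (w t).1 = i then (-1 : ℝ)^t else 0 with hf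
    have h1 : ∑ j, D i j = ∑ t ∈ Finset.range L, f t := by
      rw [show (∑ j, D i j) = ∑ j, ∑ t ∈ Finset.range L,
          (if w t = (i, j) then (-1 : ℝ)^t else 0) from rfl, Finset.sum_comm]
      apply Finset.sum_congr rfl
      intro t _
      simp only [hf]
      by_cases h : (w t).1 = i
      · rw [if_pos h, Finset.sum_eq_single (w t).2]
        · rw [if_pos (by rw [← h])]
        · intro b _ hbt
          exact if_neg (fun hc => hbt (by rw [hc]))
        · intro hb; exact absurd (Finset.mem_univ _) hb
      · rw [if_neg h]
        exact Finset.sum_eq_zero fun b _ => if_neg (fun hc => h (by rw [hc]))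
    have h2 : ∑ t ∈ Finset.range L, f t = ∑ t ∈ Finset.range L, f ((t + 1) % L) :=
      (sum_shift f L (by omega)).symm
    have h3 := sum_two_mul (fun t => f ((t + 1) % L)) N
    have h4 : ∀ s ∈ Finset.range N,
        (fun t => f ((t + 1) % L)) (2 * s) + (fun t => f ((t + 1) % L)) (2 * s + 1) = 0 := by
      intro s hs
      have hsN : s < N := Finset.mem_range.mp hs
      have hsL : 2 * s + 1 < L := by omega
      have e1 : (2 * s + 1) % L = 2 * s + 1 := Nat.mod_eq_of_lt hsL
      have hr := hrow (2 * s + 1) hsL (by omega)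
      have hodd : ((-1 : ℝ))^(2 * s + 1) = -1 := Odd.neg_one_pow ⟨s, by ring⟩
      have heven : ((-1 : ℝ))^((2 * s + 1 + 1) % L) = 1 := by
        apply Even.neg_one_pow
        rw [Nat.even_iff, par_mod L (by omega)]
        omega
      simp only [hf, e1]
      rw [hr, hodd, heven]
      by_cases h : (w (2 * s + 1)).1 = i <;> simp [h]
    rw [h1, h2, hLdef, h3, Finset.sum_eq_zero h4]
  -- column sums of D vanish
  have hcolD : ∀ j, ∑ i, D i j = 0 := by
    intro j
    set f : ℕ → ℝ := fun t => if (w t).2 = j then (-1 : ℝ)^t else 0 with hf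
    have h1 : ∑ i, D i j = ∑ t ∈ Finset.range L, f t := by
      rw [show (∑ i, D i j) = ∑ i, ∑ t ∈ Finset.range L,
          (if w t = (i, j) then (-1 : ℝ)^t else 0) from rfl, Finset.sum_comm]
      apply Finset.sum_congr rfl
      intro t _
      simp only [hf]
      by_cases h : (w t).2 = j
      · rw [if_pos h, Finset.sum_eq_single (w t).1]
        · rw [if_pos (by rw [← h])]
        · intro b _ hbt
          exact if_neg (fun hc => hbt (by rw [hc]))
        · intro hb; exact absurd (Finset.mem_univ _) hb
      · rw [if_neg h]
        exact Finset.sum_eq_zero fun b _ => if_neg (fun hc => h (by rw [hc]))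
    have h3 := sum_two_mul f N
    have h4 : ∀ s ∈ Finset.range N, f (2 * s) + f (2 * s + 1) = 0 := by
      intro s hs
      have hsN : s < N := Finset.mem_range.mp hs
      have hsL : 2 * s < L := by omega
      have hsL1 : 2 * s + 1 < L := by omega
      have hc := hcol (2 * s) hsL (by omega)
      have e1 : (2 * s + 1) % L = 2 * s + 1 := Nat.mod_eq_of_lt hsL1
      rw [e1] at hc
      have hodd : ((-1 : ℝ))^(2 * s + 1) = -1 := Odd.neg_one_pow ⟨s, by ring⟩
      have heven : ((-1 : ℝ))^(2 * s) = 1 := Even.neg_one_pow ⟨s, by ring⟩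
      simp only [hf]
      rw [hc, hodd, heven]
      by_cases h : (w (2 * s)).2 = j <;> simp [h]
    rw [h1, hLdef, h3, Finset.sum_eq_zero h4]
  -- epsilon
  obtain ⟨t₀, ht₀, hmin⟩ := Finset.exists_min_image (Finset.range L)
    (fun t => A (w t).1 (w t).2) ⟨0, Finset.mem_range.mpr (by omega)⟩
  set ε : ℝ := A (w t₀).1 (w t₀).2 with hε
  have hε0 : 0 < ε := hpos t₀ (Finset.mem_range.mp ht₀)
  have hεle : ∀ t < L, ε ≤ A (w t).1 (w t).2 := fun t ht => hmin t (Finset.mem_range.mpr ht)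
  set B : Matrix (Fin n) (Fin m) ℝ := fun i j => A i j + ε * D i j with hBdef
  set C : Matrix (Fin n) (Fin m) ℝ := fun i j => A i j - ε * D i j with hCdef
  have hbound : ∀ i j, 0 ≤ B i j ∧ 0 ≤ C i j := by
    intro i j
    by_cases hz : ∀ t < L, w t ≠ (i, j)
    · have hD' : D i j = 0 := hD0 i j hz
      constructor <;> simp only [hBdef, hCdef, hD', mul_zero, add_zero, sub_zero] <;>
        exact hA1 i j
    · push_neg at hz
      obtain ⟨t, htL, hwt⟩ := hz
      have hAij : ε ≤ A i j := by
        have := hεle t htL; rw [hwt] at this; exact this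
      have hDij : D i j = (-1 : ℝ)^t := by
        have := hDval t htL; rw [hwt] at this; exact this
      rcases Nat.even_or_odd t with he | ho
      · rw [Even.neg_one_pow he] at hDij
        constructor <;> simp only [hBdef, hCdef, hDij, mul_one] <;> linarith
      · rw [Odd.neg_one_pow ho] at hDij
        constructor <;> simp only [hBdef, hCdef, hDij, mul_neg_one] <;> linarith
  have hBD : IsDSA n m B := by
    refine ⟨fun i j => (hbound i j).1, fun j => ?_, fun i => ?_⟩
    · rw [show (∑ i, B i j) = ∑ i, (A i j + ε * D i j) from rfl, Finset.sum_add_distrib,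
        ← Finset.mul_sum, hcolD, hA2, mul_zero, add_zero]
    · rw [show (∑ j, B i j) = ∑ j, (A i j + ε * D i j) from rfl, Finset.sum_add_distrib,
        ← Finset.mul_sum, hrowD, hA3, mul_zero, add_zero]
  have hCD : IsDSA n m C := by
    refine ⟨fun i j => (hbound i j).2, fun j => ?_, fun i => ?_⟩
    · rw [show (∑ i, C i j) = ∑ i, (A i j - ε * D i j) from rfl, Finset.sum_sub_distrib,
        ← Finset.mul_sum, hcolD, hA2, mul_zero, sub_zero]
    · rw [show (∑ j, C i j) = ∑ j, (A i j - ε * D i j) from rfl, Finset.sum_sub_distrib,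
        ← Finset.mul_sum, hrowD, hA3, mul_zero, sub_zero]
  have hconv : A = (1/2 : ℝ) • B + (1 - 1/2 : ℝ) • C := by
    funext i j
    simp only [Matrix.add_apply, Matrix.smul_apply, Pi.smul_apply, smul_eq_mul, hBdef, hCdef]
    show A i j = (1/2 : ℝ) * (A i j + ε * D i j) + (1 - 1/2 : ℝ) * (A i j - ε * D i j)
    ring
  have hD1 : D (w 0).1 (w 0).2 = 1 := by
    have := hDval 0 (by omega); simpa using this
  rcases hExt B C (1/2) hBD hCD (by norm_num) (by norm_num) hconv with hBA | hCA
  · have := congrFun (congrFun hBA (w 0).1) (w 0).2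
    simp only [hBdef, hD1, mul_one] at this
    linarith
  · have := congrFun (congrFun hCA (w 0).1) (w 0).2
    simp only [hCdef, hD1, mul_one] at this
    linarith

private lemma no_cycle' {n m : ℕ} {A : Matrix (Fin n) (Fin m) ℝ} (hA : IsExtremal n m A)
    (L : ℕ) (hL2 : 0 < L) (hLe : L % 2 = 0) (w : ℕ → Fin n × Fin m)
    (hpos : ∀ t < L, 0 < A (w t).1 (w t).2)
    (hinj : ∀ t < L, ∀ t' < L, w t = w t' → t = t')
    (hcol : ∀ t < L, t % 2 = 1 → (w ((t + 1) % L)).2 = (w t).2)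
    (hrow : ∀ t < L, t % 2 = 0 → (w ((t + 1) % L)).1 = (w t).1) : False := by
  apply no_cycle hA L hL2 hLe (fun t => w ((t + 1) % L))
  · intro t _
    exact hpos _ (Nat.mod_lt _ (by omega))
  · intro t ht t' ht' h
    have h2 := hinj _ (Nat.mod_lt _ (by omega)) _ (Nat.mod_lt _ (by omega)) h
    rcases Nat.lt_or_ge (t + 1) L with h1 | h1 <;> rcases Nat.lt_or_ge (t' + 1) L with h3 | h3
    · rw [Nat.mod_eq_of_lt h1, Nat.mod_eq_of_lt h3] at h2; omega
    · have e2 : t' + 1 = L := by omega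
      rw [Nat.mod_eq_of_lt h1, e2, Nat.mod_self] at h2; omega
    · have e2 : t + 1 = L := by omega
      rw [Nat.mod_eq_of_lt h3, e2, Nat.mod_self] at h2; omega
    · omega
  · intro t ht hpar
    have h1 : (t + 1) % L < L := Nat.mod_lt _ (by omega)
    have h2 : ((t + 1) % L) % 2 = 1 := by rw [par_mod L hLe]; omega
    have h3 := hcol ((t + 1) % L) h1 h2
    show (w (((t + 1) % L + 1) % L)).2 = (w ((t + 1) % L)).2
    exact h3
  · intro t ht hpar
    have h1 : (t + 1) % L < L := Nat.mod_lt _ (by omega)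
    have h2 : ((t + 1) % L) % 2 = 0 := by rw [par_mod L hLe]; omega
    have h3 := hrow ((t + 1) % L) h1 h2
    show (w (((t + 1) % L + 1) % L)).1 = (w ((t + 1) % L)).1
    exact h3

private lemma no_bad {n k m : ℕ} (hn : 0 < n) (hk : 0 < k) (hm : m = k * n)
    {A : Matrix (Fin n) (Fin m) ℝ} (hA : IsExtremal n m A) (i0 : Fin n) (j0 : Fin m) :
    ¬(0 < A i0 j0 ∧ A i0 j0 < n) := by
  classical
  intro hbad0
  have hA1 : ∀ i j, 0 ≤ A i j := hA.1.1
  have hA2 : ∀ j, ∑ i, A i j = (n : ℝ) := hA.1.2.1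
  have hA3 : ∀ i, ∑ j, A i j = (m : ℝ) := hA.1.2.2
  set Pb : Fin n × Fin m → Prop := fun p => 0 < A p.1 p.2 ∧ A p.1 p.2 < n with hPbdef
  have hub : ∀ i j, A i j ≤ n := by
    intro i j
    have h := Finset.single_le_sum (f := fun i' => A i' j)
      (fun i' _ => hA1 i' j) (Finset.mem_univ i)
    rw [hA2 j] at h
    exact h
  have colStep : ∀ p, Pb p → ∃ i', i' ≠ p.1 ∧ Pb (i', p.2) := by
    intro p hp
    have hsplit : A p.1 p.2 + ∑ i' ∈ Finset.univ.erase p.1, A i' p.2 = n := by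
      rw [Finset.add_sum_erase Finset.univ (fun i' => A i' p.2) (Finset.mem_univ p.1)]
      exact hA2 p.2
    have hpos : 0 < ∑ i' ∈ Finset.univ.erase p.1, A i' p.2 := by
      have := hp.2; linarith
    obtain ⟨i', hi'mem, hi'pos⟩ : ∃ i' ∈ Finset.univ.erase p.1, 0 < A i' p.2 := by
      by_contra hcon
      push_neg at hcon
      have : ∑ i' ∈ Finset.univ.erase p.1, A i' p.2 ≤ 0 :=
        Finset.sum_nonpos (fun x hx => hcon x hx)
      linarith
    refine ⟨i', (Finset.mem_erase.mp hi'mem).1, hi'pos, ?_⟩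
    have hle : A i' p.2 ≤ ∑ x ∈ Finset.univ.erase p.1, A x p.2 :=
      Finset.single_le_sum (fun x _ => hA1 x p.2) hi'mem
    have := hp.1
    show A i' p.2 < n
    linarith
  have rowStep : ∀ p, Pb p → ∃ j', j' ≠ p.2 ∧ Pb (p.1, j') := by
    intro p hp
    by_contra hcon
    push_neg at hcon
    have hval : ∀ j' ∈ Finset.univ.erase p.2, A p.1 j' = 0 ∨ A p.1 j' = (n : ℝ) := by
      intro j' hj'
      have hne := (Finset.mem_erase.mp hj').1
      have h := hcon j' hne
      have h0 := hA1 p.1 j'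
      have h1 := hub p.1 j'
      rcases eq_or_lt_of_le h0 with heq | hlt
      · exact Or.inl heq.symm
      · right
        by_contra hne2
        rw [hPbdef] at h
        exact h ⟨hlt, lt_of_le_of_ne h1 hne2⟩
    set F := (Finset.univ.erase p.2).filter (fun j' => A p.1 j' ≠ 0) with hF
    have hsum_erase : ∑ j' ∈ Finset.univ.erase p.2, A p.1 j' = (F.card : ℝ) * n := by
      rw [← Finset.sum_filter_ne_zero (Finset.univ.erase p.2)]
      rw [Finset.sum_congr rfl (g := fun _ => (n : ℝ)) (fun j' hj' => ?_)]
      · rw [Finset.sum_const, nsmul_eq_mul]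
      · rcases hval j' (Finset.mem_filter.mp hj').1 with h | h
        · exact absurd h (Finset.mem_filter.mp hj').2
        · exact h
    have htot : (m : ℝ) = A p.1 p.2 + (F.card : ℝ) * n := by
      rw [← hA3 p.1, ← hsum_erase,
        Finset.add_sum_erase Finset.univ (fun j' => A p.1 j') (Finset.mem_univ p.2)]
    have hn1 : (1 : ℝ) ≤ n := by exact_mod_cast hn
    rcases le_or_gt k F.card with h | h
    · have hc : (k : ℝ) ≤ F.card := by exact_mod_cast h
      have hp1 := hp.1
      have hmr : (m : ℝ) = (k : ℝ) * n := by rw [hm]; push_cast; ring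
      rw [hmr] at htot
      nlinarith
    · have hc : (F.card : ℝ) ≤ (k : ℝ) - 1 := by
        have : F.card + 1 ≤ k := h
        have : (F.card : ℝ) + 1 ≤ k := by exact_mod_cast this
        linarith
      have hp2 := hp.2
      have hmr : (m : ℝ) = (k : ℝ) * n := by rw [hm]; push_cast; ring
      rw [hmr] at htot
      nlinarith
  -- combined parity step
  have step : ∀ (t : ℕ) (p : Fin n × Fin m), Pb p → ∃ p' : Fin n × Fin m, Pb p' ∧ p' ≠ p ∧
      (t % 2 = 0 → p'.2 = p.2) ∧ (t % 2 = 1 → p'.1 = p.1) := by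
    intro t p hp
    by_cases hpar : t % 2 = 0
    · obtain ⟨i', hne, hPb'⟩ := colStep p hp
      refine ⟨(i', p.2), hPb', ?_, fun _ => rfl, fun h => ?_⟩
      · intro h; exact hne (congrArg Prod.fst h)
      · omega
    · obtain ⟨j', hne, hPb'⟩ := rowStep p hp
      refine ⟨(p.1, j'), hPb', ?_, fun h => ?_, fun _ => rfl⟩
      · intro h; exact hne (congrArg Prod.snd h)
      · omega
  -- the walk
  set Q : ℕ → {p : Fin n × Fin m // Pb p} := fun t => Nat.rec ⟨(i0, j0), hbad0⟩
    (fun t' ih => ⟨(step t' ih.1 ih.2).choose, (step t' ih.1 ih.2).choose_spec.1⟩) t with hQdef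
  set q : ℕ → Fin n × Fin m := fun t => (Q t).1 with hqdef
  have hqPb : ∀ t, Pb (q t) := fun t => (Q t).2
  have hstep : ∀ t, q (t + 1) ≠ q t ∧ (t % 2 = 0 → (q (t + 1)).2 = (q t).2) ∧
      (t % 2 = 1 → (q (t + 1)).1 = (q t).1) := by
    intro t
    have h := (step t (q t) (hqPb t)).choose_spec
    exact ⟨h.2.1, h.2.2.1, h.2.2.2⟩
  -- pigeonhole
  have hex : ∃ b, ∃ a, a < b ∧ q a = q b := by
    obtain ⟨x, y, hxy, hqe⟩ := Finite.exists_ne_map_eq_of_infinite q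
    rcases Nat.lt_or_ge x y with h | h
    · exact ⟨y, x, h, hqe⟩
    · exact ⟨x, y, by omega, hqe.symm⟩
  obtain ⟨b, a, hab, hqab, hbmin⟩ :
      ∃ b a, a < b ∧ q a = q b ∧ ∀ b' < b, ¬∃ a' < b', q a' = q b' := by
    obtain ⟨a, ha1, ha2⟩ := Nat.find_spec hex
    exact ⟨Nat.find hex, a, ha1, ha2, fun b' hb' => Nat.find_min hex hb'⟩
  have hdist : ∀ r < b, ∀ r' < b, q r = q r' → r = r' := by
    intro r hr r' hr' hqe
    by_contra hne
    rcases Nat.lt_or_ge r r' with h | h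
    · exact hbmin r' hr' ⟨r, h, hqe⟩
    · exact hbmin r hr ⟨r', by omega, hqe.symm⟩
  have hb2 : a + 2 ≤ b := by
    by_contra hcon
    have hba : b = a + 1 := by omega
    rw [hba] at hqab
    exact (hstep a).1 hqab.symm
  by_cases hpar : a % 2 = b % 2
  -- CASE 1 : same parity
  · set L := b - a with hLdef
    set w : ℕ → Fin n × Fin m := fun t => q (a + t) with hwdef
    have hL2 : 0 < L := by omega
    have hLe : L % 2 = 0 := by omega
    have hwrap : ∀ t < L, w ((t + 1) % L) = q (a + t + 1) := by
      intro t ht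
      rcases Nat.lt_or_ge (t + 1) L with h | h
      · rw [hwdef]
        simp only
        rw [Nat.mod_eq_of_lt h]
        have e : a + (t + 1) = a + t + 1 := by omega
        rw [e]
      · have he : t + 1 = L := by omega
        have hba : a + t + 1 = b := by omega
        rw [he, Nat.mod_self, hwdef]
        simp only [Nat.add_zero]
        rw [hqab, hba]
    have hpos : ∀ t < L, 0 < A (w t).1 (w t).2 := fun t _ => (hqPb (a + t)).1
    have hinj : ∀ t < L, ∀ t' < L, w t = w t' → t = t' := by
      intro t ht t' ht' h
      have := hdist (a + t) (by omega) (a + t') (by omega) h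
      omega
    by_cases hae : a % 2 = 0
    · apply no_cycle hA L hL2 hLe w hpos hinj
      · intro t ht hte
        rw [hwrap t ht]
        exact (hstep (a + t)).2.1 (by omega)
      · intro t ht hto
        rw [hwrap t ht]
        exact (hstep (a + t)).2.2 (by omega)
    · apply no_cycle' hA L hL2 hLe w hpos hinj
      · intro t ht hto
        rw [hwrap t ht]
        exact (hstep (a + t)).2.1 (by omega)
      · intro t ht hte
        rw [hwrap t ht]
        exact (hstep (a + t)).2.2 (by omega)
  -- CASE 2 : different parity
  · set L := b - a - 1 with hLdef
    set w : ℕ → Fin n × Fin m := fun t => q (a + 1 + t) with hwdef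
    have hL2 : 0 < L := by omega
    have hLe : L % 2 = 0 := by omega
    have hwrap1 : ∀ t, t + 1 < L → w ((t + 1) % L) = q (a + 1 + t + 1) := by
      intro t h
      rw [hwdef]
      simp only
      rw [Nat.mod_eq_of_lt h]
      have e : a + 1 + (t + 1) = a + 1 + t + 1 := by omega
      rw [e]
    have hwrap0 : w ((L - 1 + 1) % L) = q (a + 1) := by
      rw [hwdef]
      simp only
      have : (L - 1 + 1) % L = 0 := by
        have : L - 1 + 1 = L := by omega
        rw [this, Nat.mod_self]
      rw [this]
    have hwL1 : w (L - 1) = q (b - 1) := by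
      rw [hwdef]
      simp only
      congr 1
      omega
    have hpos : ∀ t < L, 0 < A (w t).1 (w t).2 := fun t _ => (hqPb (a + 1 + t)).1
    have hinj : ∀ t < L, ∀ t' < L, w t = w t' → t = t' := by
      intro t ht t' ht' h
      have := hdist (a + 1 + t) (by omega) (a + 1 + t') (by omega) h
      omega
    by_cases hae : a % 2 = 0
    -- a even, b odd: wrap is a column move, internal col moves at odd t
    · have hwrapcol : (w ((L - 1 + 1) % L)).2 = (w (L - 1)).2 := by
        rw [hwrap0, hwL1]
        have h1 : (q (a + 1)).2 = (q a).2 := (hstep a).2.1 hae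
        have h2 : (q ((b - 1) + 1)).2 = (q (b - 1)).2 := (hstep (b - 1)).2.1 (by omega)
        have h3 : (b - 1) + 1 = b := by omega
        rw [h3] at h2
        rw [h1, ← h2, ← hqab]
      apply no_cycle' hA L hL2 hLe w hpos hinj
      · intro t ht hto
        rcases Nat.lt_or_ge (t + 1) L with h | h
        · rw [hwrap1 t h]
          exact (hstep (a + 1 + t)).2.1 (by omega)
        · have : t = L - 1 := by omega
          rw [this]
          exact hwrapcol
      · intro t ht hte
        have h : t + 1 < L := by omega
        rw [hwrap1 t h]
        exact (hstep (a + 1 + t)).2.2 (by omega)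
    -- a odd, b even: wrap is a row move, internal col moves at even t
    · have hwraprow : (w ((L - 1 + 1) % L)).1 = (w (L - 1)).1 := by
        rw [hwrap0, hwL1]
        have h1 : (q (a + 1)).1 = (q a).1 := (hstep a).2.2 (by omega)
        have h2 : (q ((b - 1) + 1)).1 = (q (b - 1)).1 := (hstep (b - 1)).2.2 (by omega)
        have h3 : (b - 1) + 1 = b := by omega
        rw [h3] at h2
        rw [h1, ← h2, ← hqab]
      apply no_cycle hA L hL2 hLe w hpos hinj
      · intro t ht hte
        have h : t + 1 < L := by omega
        rw [hwrap1 t h]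
        exact (hstep (a + 1 + t)).2.1 (by omega)
      · intro t ht hto
        rcases Nat.lt_or_ge (t + 1) L with h | h
        · rw [hwrap1 t h]
          exact (hstep (a + 1 + t)).2.2 (by omega)
        · have : t = L - 1 := by omega
          rw [this]
          exact hwraprow

/-- For `m = k·n`, every extremal `n × m` doubly stochastic array
has all nonzero entries equal to `n`, exactly `k` nonzero entries in each row,
exactly one nonzero entry in each column, and is equivalent to the block diagonal
matrix whose `i`-th row carries the value `n` in the `k` columns of the `i`-th
block. -/
theorem extremal_of_multiple (n k : ℕ) (hn : 0 < n) (hk : 0 < k)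
    (m : ℕ) (hm : m = k * n)
    (A : Matrix (Fin n) (Fin m) ℝ) (hA : IsExtremal n m A) :
    (∀ i j, A i j ≠ 0 → A i j = (n : ℝ)) ∧
    (∀ i : Fin n, ({j : Fin m | A i j ≠ 0}).ncard = k) ∧
    (∀ j : Fin m, ({i : Fin n | A i j ≠ 0}).ncard = 1) ∧
    MatEquiv n m A (fun i j => if j.val / k = i.val then (n : ℝ) else 0) := by
  classical
  have hA1 : ∀ i j, 0 ≤ A i j := hA.1.1
  have hA2 : ∀ j, ∑ i, A i j = (n : ℝ) := hA.1.2.1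
  have hA3 : ∀ i, ∑ j, A i j = (m : ℝ) := hA.1.2.2
  have hub : ∀ i j, A i j ≤ n := by
    intro i j
    have h := Finset.single_le_sum (f := fun i' => A i' j)
      (fun i' _ => hA1 i' j) (Finset.mem_univ i)
    rw [hA2 j] at h
    exact h
  have hval : ∀ i j, A i j ≠ 0 → A i j = (n : ℝ) := by
    intro i j hne
    have hlt := lt_of_le_of_ne (hA1 i j) (Ne.symm hne)
    by_contra hne2
    exact no_bad hn hk hm hA i j ⟨hlt, lt_of_le_of_ne (hub i j) hne2⟩
  have hnR : (0 : ℝ) < n := by exact_mod_cast hn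
  have hrowcard : ∀ i : Fin n, (Finset.univ.filter (fun j => A i j ≠ 0)).card = k := by
    intro i
    have h1 : ∑ j ∈ Finset.univ.filter (fun j => A i j ≠ 0), A i j = (m : ℝ) := by
      rw [Finset.sum_filter_ne_zero]
      exact hA3 i
    have h2 : ∑ j ∈ Finset.univ.filter (fun j => A i j ≠ 0), A i j
        = ((Finset.univ.filter (fun j => A i j ≠ 0)).card : ℝ) * n := by
      rw [Finset.sum_congr rfl (g := fun _ => (n : ℝ))
        (fun j hj => hval i j (Finset.mem_filter.mp hj).2), Finset.sum_const, nsmul_eq_mul]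
    have h3 : ((Finset.univ.filter (fun j => A i j ≠ 0)).card : ℝ) * n = (k : ℝ) * n := by
      rw [← h2, h1, hm]; push_cast; ring
    have h4 := mul_right_cancel₀ (ne_of_gt hnR) h3
    exact_mod_cast h4
  have hcolcard : ∀ j : Fin m, (Finset.univ.filter (fun i => A i j ≠ 0)).card = 1 := by
    intro j
    have h1 : ∑ i ∈ Finset.univ.filter (fun i => A i j ≠ 0), A i j = (n : ℝ) := by
      rw [Finset.sum_filter_ne_zero]
      exact hA2 j
    have h2 : ∑ i ∈ Finset.univ.filter (fun i => A i j ≠ 0), A i j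
        = ((Finset.univ.filter (fun i => A i j ≠ 0)).card : ℝ) * n := by
      rw [Finset.sum_congr rfl (g := fun _ => (n : ℝ))
        (fun i hi => hval i j (Finset.mem_filter.mp hi).2), Finset.sum_const, nsmul_eq_mul]
    have h3 : ((Finset.univ.filter (fun i => A i j ≠ 0)).card : ℝ) * n = (1 : ℝ) * n := by
      rw [← h2, h1]; ring
    have h4 := mul_right_cancel₀ (ne_of_gt hnR) h3
    exact_mod_cast h4
  refine ⟨hval, ?_, ?_, ?_⟩
  · intro i
    rw [Set.ncard_eq_toFinset_card', Set.toFinset_setOf]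
    exact hrowcard i
  · intro j
    rw [Set.ncard_eq_toFinset_card', Set.toFinset_setOf]
    exact hcolcard j
  · -- unique nonzero row in each column
    have hrex : ∀ j : Fin m, ∃ i, A i j ≠ 0 ∧ ∀ i', A i' j ≠ 0 → i' = i := by
      intro j
      obtain ⟨i, hi⟩ := Finset.card_eq_one.mp (hcolcard j)
      refine ⟨i, ?_, ?_⟩
      · have hmem : i ∈ Finset.univ.filter (fun i' => A i' j ≠ 0) := by
          rw [hi]; exact Finset.mem_singleton_self i
        exact (Finset.mem_filter.mp hmem).2
      · intro i' hi'
        have hmem : i' ∈ Finset.univ.filter (fun i'' => A i'' j ≠ 0) :=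
          Finset.mem_filter.mpr ⟨Finset.mem_univ _, hi'⟩
        rw [hi] at hmem
        exact Finset.mem_singleton.mp hmem
    choose r hrne hruniq using hrex
    have hdivlt : ∀ j : Fin m, j.val / k < n := by
      intro j
      have hj := j.2
      exact Nat.div_lt_of_lt_mul (lt_of_lt_of_eq hj hm)
    set c : Fin m → Fin n := fun j => ⟨j.val / k, hdivlt j⟩ with hc
    have hrfiber : ∀ i, (Finset.univ.filter (fun j => r j = i)).card = k := by
      intro i
      have he : (Finset.univ.filter (fun j => r j = i))
          = Finset.univ.filter (fun j => A i j ≠ 0) := by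
        ext j
        simp only [Finset.mem_filter, Finset.mem_univ, true_and]
        constructor
        · intro h; rw [← h]; exact hrne j
        · intro h; exact (hruniq j i h).symm
      rw [he]
      exact hrowcard i
    have hcfiber : ∀ i : Fin n, (Finset.univ.filter (fun j => c j = i)).card = k := by
      intro i
      have hbnd : ∀ x : Fin k, i.val * k + x.val < m := by
        intro x
        have h1 : i.val + 1 ≤ n := i.2
        have h2 : (i.val + 1) * k ≤ n * k := Nat.mul_le_mul_right k h1
        have h3 : x.val < k := x.2
        have : i.val * k + x.val < (i.val + 1) * k := by
          have : (i.val + 1) * k = i.val * k + k := by ring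
          omega
        rw [hm]
        have hnk : n * k = k * n := Nat.mul_comm n k
        omega
      set emb : Fin k → Fin m := fun x => ⟨i.val * k + x.val, hbnd x⟩ with hemb
      have hinj : Function.Injective emb := by
        intro x y hxy
        have := congrArg Fin.val hxy
        simp only [hemb] at this
        exact Fin.ext (by omega)
      have himg : Finset.univ.filter (fun j => c j = i) = Finset.image emb Finset.univ := by
        ext j
        simp only [Finset.mem_filter, Finset.mem_univ, true_and, Finset.mem_image]
        constructor
        · intro h
          have hv : j.val / k = i.val := congrArg Fin.val h
          refine ⟨⟨j.val % k, Nat.mod_lt _ hk⟩, ?_⟩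
          apply Fin.ext
          simp only [hemb]
          have hd := Nat.div_add_mod j.val k
          rw [hv] at hd
          rw [Nat.mul_comm i.val k]
          exact hd
        · rintro ⟨x, rfl⟩
          apply Fin.ext
          show (i.val * k + x.val) / k = i.val
          rw [show i.val * k + x.val = x.val + k * i.val from by ring,
            Nat.add_mul_div_left _ _ hk, Nat.div_eq_of_lt x.2]
          omega
      rw [himg, Finset.card_image_of_injective _ hinj, Finset.card_univ, Fintype.card_fin]
    have hfib : ∀ i : Fin n, Fintype.card {j // c j = i} = Fintype.card {j // r j = i} := by
      intro i
      rw [Fintype.card_subtype, Fintype.card_subtype, hcfiber, hrfiber]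
    set τ : Equiv.Perm (Fin m) :=
      Equiv.ofFiberEquiv (f := c) (g := r) (fun i => Fintype.equivOfCardEq (hfib i)) with hτdef
    have hτ : ∀ j, r (τ j) = c j := fun j => Equiv.ofFiberEquiv_map _ j
    refine ⟨Equiv.refl _, τ, ?_⟩
    intro i j
    show (if j.val / k = i.val then (n : ℝ) else 0) = A ((Equiv.refl _) i) (τ j)
    simp only [Equiv.refl_apply]
    by_cases h : j.val / k = i.val
    · rw [if_pos h]
      have hcj : c j = i := Fin.ext h
      have hri : r (τ j) = i := by rw [hτ j, hcj]
      rw [← hri]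
      exact (hval _ _ (hrne (τ j))).symm
    · rw [if_neg h]
      by_contra hne
      have hAne : A i (τ j) ≠ 0 := fun hz => hne hz.symm
      have hiq := hruniq (τ j) i hAne
      rw [hτ j] at hiq
      exact h (congrArg Fin.val hiq).symm
end

section
/- An n × m doubly stochastic array A is extremal if and only if the conditions 'B is an n × m doubly stochastic array' and 'supp B = supp A' together imply B = A. -/
/-- A doubly stochastic array is extremal if and only if it is the
unique doubly stochastic array with its support. -/
theorem extremal_iff_unique_with_support (n m : ℕ)
    (A : Matrix (Fin n) (Fin m) ℝ) (hA : IsDSA n m A) :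
    IsExtremal n m A ↔
      ∀ B : Matrix (Fin n) (Fin m) ℝ, IsDSA n m B → matSupp n m B = matSupp n m A → B = A := by
  constructor
  · rintro ⟨-, hext⟩ B hB hsupp
    -- degenerate cases
    rcases Nat.eq_zero_or_pos n with hn | hn
    · subst hn; funext i; exact i.elim0
    rcases Nat.eq_zero_or_pos m with hm | hm
    · subst hm; funext i j; exact j.elim0
    have hne : (Finset.univ : Finset (Fin n × Fin m)).Nonempty :=
      ⟨(⟨0, hn⟩, ⟨0, hm⟩), Finset.mem_univ _⟩
    set f : Fin n × Fin m → ℝ := fun p =>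
      if A p.1 p.2 = 0 then 1 else A p.1 p.2 / (|A p.1 p.2 - B p.1 p.2| + 1) with hf
    have hfpos : ∀ p, 0 < f p := by
      intro p
      by_cases h : A p.1 p.2 = 0
      · simp [hf, h]
      · have hApos : 0 < A p.1 p.2 := lt_of_le_of_ne (hA.1 p.1 p.2) (Ne.symm h)
        have : 0 < |A p.1 p.2 - B p.1 p.2| + 1 :=
          lt_of_lt_of_le one_pos (le_add_of_nonneg_left (abs_nonneg _))
        simp only [hf, h, if_false]
        positivity
    set ε : ℝ := Finset.univ.inf' hne f with hε
    have hεpos : 0 < ε := (Finset.lt_inf'_iff hne).2 fun p _ => hfpos p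
    have hεle : ∀ p : Fin n × Fin m, ε ≤ f p := fun p =>
      Finset.inf'_le f (Finset.mem_univ p)
    -- zero positions coincide
    have hzero : ∀ i j, A i j = 0 → B i j = 0 := by
      intro i j h
      by_contra hb
      have : (i, j) ∈ matSupp n m A := hsupp ▸ hb
      exact this h
    set C : Matrix (Fin n) (Fin m) ℝ :=
      fun i j => A i j + ε * (A i j - B i j) with hC
    have hCnn : ∀ i j, 0 ≤ C i j := by
      intro i j
      by_cases h : A i j = 0
      · simp [hC, h, hzero i j h]
      · have h1 : ε ≤ A i j / (|A i j - B i j| + 1) := by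
          have := hεle (i, j); simpa [hf, h] using this
        have h2 : 0 < |A i j - B i j| + 1 :=
          lt_of_lt_of_le one_pos (le_add_of_nonneg_left (abs_nonneg _))
        have h3 : ε * (|A i j - B i j| + 1) ≤ A i j := (le_div_iff₀ h2).1 h1
        have h4 := neg_abs_le (A i j - B i j)
        have h5 := abs_nonneg (A i j - B i j)
        simp only [hC]
        nlinarith
    have hCdsa : IsDSA n m C := by
      refine ⟨hCnn, fun j => ?_, fun i => ?_⟩
      · simp only [hC]
        rw [Finset.sum_add_distrib, ← Finset.mul_sum, Finset.sum_sub_distrib,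
          hA.2.1 j, hB.2.1 j]
        ring
      · simp only [hC]
        rw [Finset.sum_add_distrib, ← Finset.mul_sum, Finset.sum_sub_distrib,
          hA.2.2 i, hB.2.2 i]
        ring
    have h1ε : (0:ℝ) < 1 + ε := by linarith
    have hdecomp : A = (ε / (1 + ε)) • B + (1 - ε / (1 + ε)) • C := by
      funext i j
      simp only [Matrix.add_apply, Matrix.smul_apply, smul_eq_mul, hC]
      show A i j = ε / (1 + ε) * B i j + (1 - ε / (1 + ε)) * (A i j + ε * (A i j - B i j))
      field_simp
      ring
    have := hext B C (ε / (1 + ε)) hB hCdsa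
      (by positivity)
      (by rw [div_lt_one h1ε]; linarith)
      hdecomp
    rcases this with h | h
    · exact h
    · -- C = A forces B = A
      funext i j
      have := congrFun (congrFun h i) j
      simp only [hC] at this
      have : ε * (A i j - B i j) = 0 := by linarith
      have := (mul_eq_zero.1 this).resolve_left (ne_of_gt hεpos)
      linarith
  · intro hU
    refine ⟨hA, fun B C t hB hC ht ht1 hEq => ?_⟩
    have hEq' : ∀ i j, A i j = t * B i j + (1 - t) * C i j := by
      intro i j
      have := congrFun (congrFun hEq i) j
      simpa [Matrix.add_apply, Matrix.smul_apply, smul_eq_mul] using this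
    -- supp B ⊆ supp A, indeed A i j = 0 → B i j = 0
    have hzB : ∀ i j, A i j = 0 → B i j = 0 := by
      intro i j h
      have h1 := hEq' i j
      have h2 := hB.1 i j
      have h3 := hC.1 i j
      nlinarith
    left
    set B' : Matrix (Fin n) (Fin m) ℝ := fun i j => (B i j + A i j) / 2 with hB'
    have hB'dsa : IsDSA n m B' := by
      refine ⟨fun i j => by
        have := hB.1 i j; have := hA.1 i j; simp only [hB']; positivity,
        fun j => ?_, fun i => ?_⟩
      · simp only [hB']
        rw [← Finset.sum_div, Finset.sum_add_distrib, hA.2.1 j, hB.2.1 j]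
        ring
      · simp only [hB']
        rw [← Finset.sum_div, Finset.sum_add_distrib, hA.2.2 i, hB.2.2 i]
        ring
    have hsupp : matSupp n m B' = matSupp n m A := by
      ext ⟨i, j⟩
      simp only [matSupp, Set.mem_setOf_eq, hB']
      constructor
      · intro h hA0
        exact h (by rw [hzB i j hA0, hA0]; ring)
      · intro h
        have hApos : 0 < A i j := lt_of_le_of_ne (hA.1 i j) (Ne.symm h)
        have := hB.1 i j
        positivity
    have hBA := hU B' hB'dsa hsupp
    funext i j
    have := congrFun (congrFun hBA i) j
    simp only [hB'] at this
    linarith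
end
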